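/- arXiv:2012.10290 — 13 statements merged into one kernel-verified Lean document; each statement's English description precedes it below -/
import Mathlib

section
/- Let R be a commutative ring in which 2 is invertible and let B be a commutative R-algebra that is free of rank 2 as an R-module. If x, y ∈ B satisfy tr_{B/R}(x) = 0 and tr_{B/R}(y) = 0, then the product x·y lies in the image of the structure map R → B. -/
/-! Cayley–Hamilton in rank 2 gives `z² = tr(z) z - N(z)`, so a trace-zero element squares into `R`.
Since the trace-zero elements form an `R`-submodule, polarization `2xy = (x + y)² - x² - y²`
then puts `x * y` in `R` once `2` is invertible. -/

theorem Matrix.mul_self_fin_two {R : Type*} [CommRing R] (M : Matrix (Fin 2) (Fin 2) R) :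
    M * M = M.trace • M - M.det • 1 := by
  ext i j
  fin_cases i <;> fin_cases j <;>
    simp [Matrix.mul_apply, Matrix.trace_fin_two, Matrix.det_fin_two] <;> ring

theorem Algebra.mul_self_eq_trace_smul_sub_norm {R B : Type*} [CommRing R] [CommRing B]
    [Algebra R B] (v : Module.Basis (Fin 2) R B) (z : B) :
    z * z = Algebra.trace R B z • z - algebraMap R B (Algebra.norm R z) := by
  apply Algebra.leftMulMatrix_injective v
  rw [Algebra.trace_eq_matrix_trace v, Algebra.norm_eq_matrix_det v, map_mul, map_sub,
    map_smul, AlgHom.commutes, Algebra.algebraMap_eq_smul_one]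
  exact Matrix.mul_self_fin_two _

theorem Subalgebra.mul_mem_of_mul_self_mem {R B : Type*} [CommRing R] [CommRing B]
    [Algebra R B] (A : Subalgebra R B) (h2 : IsUnit (2 : R)) {x y : B}
    (hx : x * x ∈ A) (hy : y * y ∈ A) (hxy : (x + y) * (x + y) ∈ A) : x * y ∈ A := by
  have h2xy : (2 : R) • (x * y) ∈ A := by
    have : (2 : R) • (x * y) = (x + y) * (x + y) - x * x - y * y := by
      rw [two_smul]; ring
    rw [this]
    exact A.sub_mem (A.sub_mem hxy hx) hy
  simpa [smul_smul] using A.smul_mem h2xy ↑h2.unit⁻¹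

/-- Let `R` be a commutative ring in which `2` is invertible and let `B` be a commutative
`R`-algebra that is free of rank `2` as an `R`-module.  If `x, y ∈ B` have trace zero, then
`x * y` lies in the image of the structure map `R → B`. -/
theorem stacky_covers_mu2_trace_zero_mul (R B : Type*) [CommRing R] [CommRing B] [Algebra R B]
    (h2 : IsUnit (2 : R)) (v : Module.Basis (Fin 2) R B) (x y : B)
    (hx : Algebra.trace R B x = 0) (hy : Algebra.trace R B y = 0) :
    x * y ∈ Set.range (algebraMap R B) := by
  have hsq : ∀ z, Algebra.trace R B z = 0 → z * z ∈ (⊥ : Subalgebra R B) := fun z hz => by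
    rw [Algebra.mul_self_eq_trace_smul_sub_norm v z, hz, zero_smul, zero_sub]
    exact Subalgebra.neg_mem _ (Subalgebra.algebraMap_mem _ _)
  rw [← Algebra.coe_bot]
  exact (⊥ : Subalgebra R B).mul_mem_of_mul_self_mem h2 (hsq x hx) (hsq y hy)
    (hsq (x + y) (by rw [map_add, hx, hy, add_zero]))
end

section
/- Let R be a commutative ring, A a finite abelian group, f : A × A → R a function, and B a commutative R-algebra which is free as an R-module with basis (v_λ)_{λ ∈ A} such that v_0 = 1 and v_λ · v_{λ'} = f(λ, λ') · v_{λ+λ'} for all λ, λ' ∈ A. Then the determinant of the trace matrix (tr_{B/R}(v_λ · v_μ))_{λ,μ ∈ A} (the discriminant of B over R with respect to the basis v) equals ε · |A|^{|A|} · ∏_{λ ∈ A} f(λ, −λ), where ε ∈ {±1} is the sign of the permutation λ ↦ −λ of A. -/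
/-!
Multiplication by `v λ * v μ` sends each basis vector `v κ` to a multiple of `v (λ + μ + κ)`, so
its trace vanishes unless `μ = -λ`, in which case every diagonal entry is `f (λ, -λ)` (because
`v 0 = 1` forces `f (0, κ) = 1`). Hence the trace matrix is the diagonal matrix with entries
`|A| * f (λ, -λ)` times the permutation matrix of `λ ↦ -λ`, and the determinant is read off.
-/

open Matrix

section StackyCover

variable {R B A : Type*} [AddCommGroup A] {f : A × A → R}

section Semiring

variable [CommSemiring R] [Semiring B] [Algebra R B] {v : Module.Basis A R B}

theorem coeff_zero_left_eq_one (hv0 : v 0 = 1)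
    (hmul : ∀ lam lam' : A, v lam * v lam' = f (lam, lam') • v (lam + lam')) (k : A) :
    f (0, k) = 1 := by
  have h := congrArg (fun x => v.repr x k) (hmul 0 k)
  simpa [hv0] using h.symm

theorem repr_basis_mul_basis_mul_self [DecidableEq A] (hv0 : v 0 = 1)
    (hmul : ∀ lam lam' : A, v lam * v lam' = f (lam, lam') • v (lam + lam')) (lam mu k : A) :
    v.repr (v lam * v mu * v k) k = if mu = -lam then f (lam, -lam) else 0 := by
  rw [hmul lam mu, smul_mul_assoc, hmul (lam + mu) k]
  simp only [map_smul, Module.Basis.repr_self, Finsupp.smul_apply, Finsupp.single_apply,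
    smul_eq_mul, add_eq_right, add_eq_zero_iff_eq_neg']
  split_ifs with h
  · rw [h, add_neg_cancel, coeff_zero_left_eq_one hv0 hmul, mul_one, mul_one]
  · rw [mul_zero, mul_zero]

end Semiring

variable [CommRing R] [CommRing B] [Algebra R B] [Fintype A] [DecidableEq A]
  {v : Module.Basis A R B}

theorem trace_basis_mul_basis (hv0 : v 0 = 1)
    (hmul : ∀ lam lam' : A, v lam * v lam' = f (lam, lam') • v (lam + lam')) (lam mu : A) :
    Algebra.trace R B (v lam * v mu) =
      if mu = -lam then (Fintype.card A : R) * f (lam, -lam) else 0 := by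
  rw [Algebra.trace_eq_matrix_trace v, Matrix.trace]
  simp only [diag_apply, Algebra.leftMulMatrix_eq_repr_mul,
    repr_basis_mul_basis_mul_self hv0 hmul]
  split_ifs <;> simp

theorem traceMatrix_eq_diagonal_mul_permMatrix (hv0 : v 0 = 1)
    (hmul : ∀ lam lam' : A, v lam * v lam' = f (lam, lam') • v (lam + lam')) :
    Algebra.traceMatrix R ⇑v =
      diagonal (fun lam => (Fintype.card A : R) * f (lam, -lam)) * (Equiv.neg A).permMatrix R := by
  ext lam mu
  rw [diagonal_mul, Algebra.traceMatrix_apply, Algebra.traceForm_apply,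
    trace_basis_mul_basis hv0 hmul]
  simp [Equiv.Perm.permMatrix, PEquiv.toMatrix, Equiv.toPEquiv, eq_comm]

end StackyCover

/-- The determinant of the trace matrix `(tr_{B/R}(v λ * v μ))_{λ,μ}` of the algebra of a
ramified `D(A)`-cover with trivialized line bundles equals
`ε * |A| ^ |A| * ∏_{λ ∈ A} f (λ, -λ)`, where `ε` is the sign of the permutation `λ ↦ -λ`. -/
theorem stacky_covers_discriminant_formula (R B A : Type*) [CommRing R] [CommRing B]
    [Algebra R B] [AddCommGroup A] [Fintype A] [DecidableEq A] (f : A × A → R)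
    (v : Module.Basis A R B) (hv0 : v 0 = 1)
    (hmul : ∀ lam lam' : A, v lam * v lam' = f (lam, lam') • v (lam + lam')) :
    (Algebra.traceMatrix R ⇑v).det =
      ((Equiv.Perm.sign (Equiv.neg A) : ℤ) : R) * (Fintype.card A : R) ^ Fintype.card A *
        ∏ lam : A, f (lam, -lam) := by
  rw [traceMatrix_eq_diagonal_mul_permMatrix hv0 hmul, det_mul, det_diagonal, det_permutation,
    Finset.prod_mul_distrib, Finset.prod_const, Finset.card_univ]
  ring
end

section
/- Let R be a commutative ring, A a finite abelian group, and f : A × A → R a commutative 2-cocycle of A with values in the multiplicative monoid of R. Let B be a commutative R-algebra which is free as an R-module with basis (v_λ)_{λ ∈ A} such that v_0 = 1 and v_λ · v_{λ'} = f(λ, λ') · v_{λ+λ'} for all λ, λ' ∈ A. Then the element d := |A|^{|A|} · ∏_{λ ∈ A} f(λ, −λ) of R annihilates the module of Kähler differentials Ω_{B/R}: for every ω ∈ Ω_{B/R}, the image of d in B acts as zero on ω. -/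
/-!
Put `a_λ = ∏_{μ ≠ λ} f (μ, -μ)` and `e = ∑_λ a_λ • v_λ ⊗ v_{-λ} ∈ B ⊗[R] B`. After the shift
`λ ↦ λ + ν`, the cocycle identity matches the coefficients of `(v_ν ⊗ 1) e` and `(1 ⊗ v_ν) e`,
so `(b ⊗ 1) e = (1 ⊗ b) e` for all `b`. Applying `x ⊗ y ↦ x dy` to this equation and using the
Leibniz rule shows that the product `μ(e) = |A| ∏_λ f (λ, -λ)` kills every `db`, hence all of
`Ω_{B/R}`; the discriminant `d` is a multiple of `μ(e)`.
-/

open TensorProduct Finset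

theorem Derivation.lmul'_smul_eq_zero {R B M : Type*} [CommRing R] [CommRing B] [Algebra R B]
    [AddCommGroup M] [Module R M] [Module B M] [IsScalarTower R B M]
    {e : B ⊗[R] B} (he : ∀ b : B, (b ⊗ₜ 1) * e = (1 ⊗ₜ b) * e)
    (D : Derivation R B M) (b : B) : Algebra.TensorProduct.lmul' (S := B) R e • D b = 0 := by
  have h := congrArg D.tensorProductTo (he b)
  simp only [Derivation.tensorProductTo_mul, Derivation.tensorProductTo_tmul,
    Algebra.TensorProduct.lmul'_apply_tmul, Derivation.map_one_eq_zero, smul_zero, one_smul,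
    mul_one, one_mul, add_zero] at h
  exact add_eq_left.mp h.symm

theorem KaehlerDifferential.lmul'_smul_eq_zero {R B : Type*} [CommRing R] [CommRing B]
    [Algebra R B] {e : B ⊗[R] B} (he : ∀ b : B, (b ⊗ₜ 1) * e = (1 ⊗ₜ b) * e)
    (ω : Ω[B⁄R]) : Algebra.TensorProduct.lmul' (S := B) R e • ω = 0 := by
  have h := (Submodule.mem_annihilator_span (Set.range (KaehlerDifferential.D R B))
    (Algebra.TensorProduct.lmul' (S := B) R e)).2
    (by rintro ⟨_, b, rfl⟩; exact Derivation.lmul'_smul_eq_zero he _ b)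
  rw [KaehlerDifferential.span_range_derivation] at h
  exact Submodule.mem_annihilator.1 h ω trivial

theorem Finset.mul_prod_erase_eq_mul_prod_erase {ι M : Type*} [DecidableEq ι] [CommMonoid M]
    {s : Finset ι} {x y : ι} (hx : x ∈ s) (hy : y ∈ s) (hxy : x ≠ y) {g : ι → M} {c d : M}
    (h : c * g y = d * g x) : c * ∏ i ∈ s.erase x, g i = d * ∏ i ∈ s.erase y, g i := by
  rw [← mul_prod_erase _ _ (mem_erase.2 ⟨hxy.symm, hy⟩),
    ← mul_prod_erase _ _ (mem_erase.2 ⟨hxy, hx⟩), erase_right_comm, ← mul_assoc, ← mul_assoc, h]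

section Cocycle

variable {A M : Type*} [AddCommGroup A] [Fintype A] [DecidableEq A] [CommMonoid M]

def cocycleCofactor (f : A × A → M) (lam : A) : M :=
  ∏ mu ∈ univ.erase lam, f (mu, -mu)

theorem cocycleCofactor_mul (f : A × A → M) (lam : A) :
    cocycleCofactor f lam * f (lam, -lam) = ∏ mu, f (mu, -mu) :=
  prod_erase_mul _ _ (mem_univ lam)

theorem mul_cocycleCofactor_add {f : A × A → M} (hf0 : ∀ lam : A, f (0, lam) = 1)
    (hfc : ∀ lam lam' : A, f (lam, lam') = f (lam', lam))
    (hfa : ∀ lam lam' lam'' : A,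
      f (lam, lam') * f (lam + lam', lam'') = f (lam', lam'') * f (lam' + lam'', lam))
    (κ ν : A) :
    f (κ, ν) * cocycleCofactor f κ = f (ν, -(κ + ν)) * cocycleCofactor f (κ + ν) := by
  rcases eq_or_ne ν 0 with rfl | hν
  · rw [add_zero, hf0, hfc, hf0]
  refine mul_prod_erase_eq_mul_prod_erase (mem_univ _) (mem_univ _) (by simpa using hν) ?_
  have h := hfa κ ν (-(κ + ν))
  rwa [show ν + -(κ + ν) = -κ by abel, hfc (-κ) κ] at h

end Cocycle

section Casimir

variable {R B A : Type*} [CommRing R] [CommRing B] [Algebra R B] [AddCommGroup A] [Fintype A]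
  [DecidableEq A]

def cocycleCasimir (f : A × A → R) (v : A → B) : B ⊗[R] B :=
  ∑ lam, cocycleCofactor f lam • (v lam ⊗ₜ[R] v (-lam))

theorem tmul_one_mul_cocycleCasimir {f : A × A → R} (hf0 : ∀ lam : A, f (0, lam) = 1)
    (hfc : ∀ lam lam' : A, f (lam, lam') = f (lam', lam))
    (hfa : ∀ lam lam' lam'' : A,
      f (lam, lam') * f (lam + lam', lam'') = f (lam', lam'') * f (lam' + lam'', lam))
    (v : Module.Basis A R B)
    (hmul : ∀ lam lam' : A, v lam * v lam' = f (lam, lam') • v (lam + lam')) (b : B) :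
    (b ⊗ₜ 1) * cocycleCasimir f v = (1 ⊗ₜ b) * cocycleCasimir f v := by
  suffices h : (LinearMap.mulRight R (cocycleCasimir f v)).comp
      (Algebra.TensorProduct.includeLeft (S := R)).toLinearMap =
      (LinearMap.mulRight R (cocycleCasimir f v)).comp
      (Algebra.TensorProduct.includeRight).toLinearMap from LinearMap.congr_fun h b
  refine v.ext fun ν => ?_
  simp only [LinearMap.comp_apply, AlgHom.toLinearMap_apply, LinearMap.mulRight_apply,
    Algebra.TensorProduct.includeLeft_apply, Algebra.TensorProduct.includeRight_apply,
    cocycleCasimir, mul_sum]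
  refine Fintype.sum_equiv (Equiv.addRight ν) _ _ fun κ => ?_
  simp only [Equiv.coe_addRight, mul_smul_comm, Algebra.TensorProduct.tmul_mul_tmul, one_mul]
  rw [mul_comm (v ν), hmul, hmul, show ν + -(κ + ν) = -κ by abel, ← smul_tmul', tmul_smul,
    smul_smul, smul_smul, mul_comm (cocycleCofactor f κ), mul_cocycleCofactor_add hf0 hfc hfa,
    mul_comm]

theorem lmul'_cocycleCasimir {f : A × A → R} {v : A → B} (hv0 : v 0 = 1)
    (hmul : ∀ lam lam' : A, v lam * v lam' = f (lam, lam') • v (lam + lam')) :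
    Algebra.TensorProduct.lmul' R (cocycleCasimir f v) =
      algebraMap R B (Fintype.card A * ∏ lam, f (lam, -lam)) := by
  simp only [cocycleCasimir, map_sum, map_smul, Algebra.TensorProduct.lmul'_apply_tmul, hmul,
    add_neg_cancel, hv0, smul_smul, cocycleCofactor_mul, sum_const, card_univ]
  rw [nsmul_eq_mul, ← Algebra.algebraMap_eq_smul_one, map_mul, map_natCast]

end Casimir

/-- Let `f : A × A → R` be a commutative 2-cocycle of a finite abelian group `A` with values
in the multiplicative monoid of `R`, and let `B` be the associated free `R`-algebra with basis
`(v λ)` and multiplication `v λ * v λ' = f (λ, λ') • v (λ + λ')`.  Then the discriminant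
`d = |A| ^ |A| * ∏_λ f (λ, -λ)` annihilates the module of Kähler differentials `Ω_{B/R}`. -/
theorem stacky_covers_discriminant_annihilates_differentials (R B A : Type*) [CommRing R]
    [CommRing B] [Algebra R B] [AddCommGroup A] [Fintype A] (f : A × A → R)
    (hf0 : ∀ lam : A, f (0, lam) = 1)
    (hfc : ∀ lam lam' : A, f (lam, lam') = f (lam', lam))
    (hfa : ∀ lam lam' lam'' : A,
      f (lam, lam') * f (lam + lam', lam'') = f (lam', lam'') * f (lam' + lam'', lam))
    (v : Module.Basis A R B) (hv0 : v 0 = 1)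
    (hmul : ∀ lam lam' : A, v lam * v lam' = f (lam, lam') • v (lam + lam')) :
    ∀ ω : KaehlerDifferential R B,
      algebraMap R B ((Fintype.card A : R) ^ Fintype.card A * ∏ lam : A, f (lam, -lam)) • ω
        = 0 := by
  classical
  intro ω
  have hkill := KaehlerDifferential.lmul'_smul_eq_zero
    (tmul_one_mul_cocycleCasimir hf0 hfc hfa v hmul) ω
  rw [lmul'_cocycleCasimir hv0 hmul] at hkill
  have hd : (Fintype.card A : R) ^ Fintype.card A * ∏ lam : A, f (lam, -lam) =
      (Fintype.card A : R) ^ (Fintype.card A - 1) *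
        (Fintype.card A * ∏ lam : A, f (lam, -lam)) := by
    rw [← mul_assoc, ← pow_succ, Nat.sub_add_cancel Fintype.card_pos]
  rw [hd, map_mul, mul_smul, hkill, smul_zero]
end

section
/- Let (R, m) be a local ring, s ∈ m a non-zero-divisor, A a finite abelian group, and c : A × A → ℕ a commutative 2-cocycle of A with values in the additive monoid ℕ. Let B be a commutative R-algebra which is free as an R-module with basis (v_λ)_{λ ∈ A} such that v_0 = 1 and v_λ · v_{λ'} = s^{c(λ,λ')} · v_{λ+λ'} for all λ, λ' ∈ A. Then for all λ, λ' ∈ A, c(λ, λ') = min { n ∈ ℕ : s^n · v_{λ+λ'} ∈ (v_λ · v_{λ'}) }, where (v_λ · v_{λ'}) denotes the principal ideal of B generated by v_λ · v_{λ'}; equivalently, c(λ, λ') is the least n with s^n lying in the ideal quotient (v_λ v_{λ'} : v_{λ+λ'}). -/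
/-! Writing `t` for the image of `s` in `B`, the relation `v λ * v λ' = t ^ c(λ, λ') * v (λ + λ')`
turns the membership condition into `t ^ n * w ∈ (t ^ c * w)` with `w = v (λ + λ')`. This holds
for `n ≥ c`, and for `n < c` cancelling the regular element `t ^ n` would put `w` in `(t)`; but the
`w`-coordinate of any multiple of `t` lies in `s R`, which does not contain `1` since `s` is not a
unit. -/

open scoped nonZeroDivisors

theorem isLeftRegular_algebraMap_of_flat {R B : Type*} [CommRing R] [Ring B] [Algebra R B]
    [Module.Flat R B] {s : R} (hs : s ∈ R⁰) : IsLeftRegular (algebraMap R B s) :=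
  fun _ _ h ↦ Module.Flat.isSMulRegular_of_nonZeroDivisors hs <| by
    simpa only [Algebra.smul_def] using h

theorem Module.Basis.notMem_span_algebraMap {R B ι : Type*} [CommRing R] [CommRing B]
    [Algebra R B] (v : Module.Basis ι R B) {s : R} (hs : ¬IsUnit s) (i : ι) :
    v i ∉ Ideal.span {algebraMap R B s} := fun h ↦ by
  obtain ⟨a, ha⟩ := Ideal.mem_span_singleton'.mp h
  have hcoeff := congrArg (v.repr · i) ha
  simp only [mul_comm a, ← Algebra.smul_def, map_smul, Finsupp.smul_apply, smul_eq_mul,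
    Module.Basis.repr_self, Finsupp.single_eq_same] at hcoeff
  exact hs (IsUnit.of_mul_eq_one _ hcoeff)

theorem pow_mul_mem_span_pow_mul_iff {B : Type*} [CommRing B] {t w : B} (ht : IsLeftRegular t)
    (hw : w ∉ Ideal.span {t}) {m n : ℕ} :
    t ^ n * w ∈ Ideal.span {t ^ m * w} ↔ m ≤ n := by
  refine ⟨fun h ↦ ?_, fun h ↦ ?_⟩
  · by_contra! hnm
    obtain ⟨y, hy⟩ := Ideal.mem_span_singleton'.mp h
    obtain ⟨k, rfl⟩ := Nat.exists_eq_add_of_lt hnm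
    have hw_eq : w = t * (t ^ k * w * y) :=
      ht.pow n (show t ^ n * w = t ^ n * (t * (t ^ k * w * y)) by rw [← hy]; ring)
    exact hw (Ideal.mem_span_singleton'.mpr ⟨t ^ k * w * y, by rw [mul_comm]; exact hw_eq.symm⟩)
  · obtain ⟨k, rfl⟩ := Nat.exists_eq_add_of_le h
    exact Ideal.mem_span_singleton'.mpr ⟨t ^ k, by ring⟩

theorem stacky_covers_order_formula_general (R B A : Type*) [CommRing R] [IsLocalRing R] [CommRing B]
    [Algebra R B] [AddCommGroup A]
    (s : R) (hs : s ∈ IsLocalRing.maximalIdeal R) (hreg : s ∈ nonZeroDivisors R)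
    (c : A × A → ℕ)
    (v : Module.Basis A R B)
    (hmul : ∀ lam lam' : A, v lam * v lam' = s ^ c (lam, lam') • v (lam + lam')) :
    ∀ lam lam' : A,
      c (lam, lam') =
        sInf {n : ℕ |
          algebraMap R B s ^ n * v (lam + lam') ∈ Ideal.span {v lam * v lam'}} := by
  intro lam lam'
  have : Module.Free R B := .of_basis v
  have hprod : v lam * v lam' = algebraMap R B s ^ c (lam, lam') * v (lam + lam') := by
    rw [hmul, Algebra.smul_def, map_pow]
  have hset : {n : ℕ | algebraMap R B s ^ n * v (lam + lam') ∈ Ideal.span {v lam * v lam'}} =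
      Set.Ici (c (lam, lam')) := by
    ext n
    rw [Set.mem_ofPred_eq, Set.mem_Ici, hprod, pow_mul_mem_span_pow_mul_iff
      (isLeftRegular_algebraMap_of_flat hreg)
      (v.notMem_span_algebraMap ((IsLocalRing.mem_maximalIdeal s).mp hs) _)]
  rw [hset, csInf_Ici]

/-- Over a local ring `(R, m)` with `s ∈ m` a non-zero-divisor, for the algebra of a ramified
`D(A)`-cover with multiplication `v λ * v λ' = s ^ c (λ, λ') • v (λ + λ')` given by a
commutative 2-cocycle `c : A × A → ℕ`, the exponent `c (λ, λ')` is recovered as the least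
`n` such that `s ^ n * v (λ + λ')` lies in the principal ideal generated by `v λ * v λ'`. -/
theorem stacky_covers_order_formula (R B A : Type*) [CommRing R] [IsLocalRing R] [CommRing B]
    [Algebra R B] [AddCommGroup A] [Fintype A]
    (s : R) (hs : s ∈ IsLocalRing.maximalIdeal R) (hreg : s ∈ nonZeroDivisors R)
    (c : A × A → ℕ)
    (hc0 : ∀ lam : A, c (0, lam) = 0)
    (hcc : ∀ lam lam' : A, c (lam, lam') = c (lam', lam))
    (hca : ∀ lam lam' lam'' : A,
      c (lam, lam') + c (lam + lam', lam'') = c (lam', lam'') + c (lam' + lam'', lam))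
    (v : Module.Basis A R B) (hv0 : v 0 = 1)
    (hmul : ∀ lam lam' : A, v lam * v lam' = s ^ c (lam, lam') • v (lam + lam')) :
    ∀ lam lam' : A,
      c (lam, lam') =
        sInf {n : ℕ |
          algebraMap R B s ^ n * v (lam + lam') ∈ Ideal.span {v lam * v lam'}} :=
  stacky_covers_order_formula_general R B A s hs hreg c v hmul
end

section
/- Let (R, m) be a local ring and A a finite abelian group of order d such that d is invertible in R. Let R[A] denote the group algebra of A over R, with counit ε : R[A] → R (sum of coefficients) and comultiplication Δ : R[A] → R[A] ⊗_R R[A] (λ ↦ λ ⊗ λ on group elements). Let I ⊆ R[A] be an ideal with ε(I) = 0 and Δ(I) ⊆ I ⊗ R[A] + R[A] ⊗ I (as R-submodules of R[A] ⊗_R R[A]). If g ∈ R[A] satisfies ε(g) = 1, Δ(g) − g ⊗ g ∈ I ⊗ R[A] + R[A] ⊗ I, and g − 1 ∈ m·R[A] + I, then g − 1 ∈ I. In other words, the only group-like element of R[A]/I congruent to 1 modulo m·(R[A]/I) is 1. -/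
/-!
The Adams operations `ψₙ : λ ↦ n • λ` of `R[A]` satisfy `ψₙ₊₁ = μ ∘ (id ⊗ ψₙ) ∘ Δ`, where `μ` is
multiplication. Hence they preserve a Hopf ideal `I`, and for `g` group-like modulo `I` they give
`ψₙ g ≡ gⁿ (mod I)`. Since `ψ_d` with `d = |A|` is `x ↦ ε(x) · 1`, we get `g^d ≡ 1 (mod I)`.
Writing `g = 1 + y` with `y ∈ m R[A] + I`, we have `g^d - 1 = y (d + y w)`; the `m R[A]`-part of
`d + y w` lies in the Jacobson radical of the finite `R`-algebra `R[A]`, so up to `I` this factor is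
a unit, and `y ∈ I`.
-/

open TensorProduct

/-- The counit of the group algebra `R[A]`: the sum of the coefficients (the `R`-linear
extension of `λ ↦ 1`). -/
noncomputable def groupAlgebraCounit (R A : Type*) [CommRing R] [AddCommGroup A]
    (x : AddMonoidAlgebra R A) : R :=
  x.coeff.sum fun _ r => r

/-- The comultiplication of the group algebra `R[A]`: the `R`-linear extension of
`λ ↦ λ ⊗ λ`. -/
noncomputable def groupAlgebraComul (R A : Type*) [CommRing R] [AddCommGroup A]
    (x : AddMonoidAlgebra R A) :
    AddMonoidAlgebra R A ⊗[R] AddMonoidAlgebra R A :=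
  x.coeff.sum fun a r =>
    r • (AddMonoidAlgebra.single a 1 ⊗ₜ[R] AddMonoidAlgebra.single a 1)

/-- The `R`-submodule `I ⊗ R[A] + R[A] ⊗ I` of `R[A] ⊗_R R[A]`: the span of the simple
tensors having one factor in `I`. -/
noncomputable def groupAlgebraMixedTensor (R A : Type*) [CommRing R] [AddCommGroup A]
    (I : Ideal (AddMonoidAlgebra R A)) :
    Submodule R (AddMonoidAlgebra R A ⊗[R] AddMonoidAlgebra R A) :=
  Submodule.span R
    ({t | ∃ a ∈ I, ∃ b, t = a ⊗ₜ[R] b} ∪ {t | ∃ a, ∃ b ∈ I, t = a ⊗ₜ[R] b})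

section GroupAlgebra

variable (R A : Type*) [CommRing R] [AddCommGroup A]

noncomputable def groupAlgebraAdams (n : ℕ) : AddMonoidAlgebra R A →ₗ[R] AddMonoidAlgebra R A :=
  AddMonoidAlgebra.mapDomainLinearMap R R (n • ·)

noncomputable def groupAlgebraMulAdams (n : ℕ) :
    AddMonoidAlgebra R A ⊗[R] AddMonoidAlgebra R A →ₗ[R] AddMonoidAlgebra R A :=
  TensorProduct.lift ((LinearMap.mul R (AddMonoidAlgebra R A)).compl₂ (groupAlgebraAdams R A n))

variable {R A}

theorem groupAlgebraAdams_single (n : ℕ) (a : A) (r : R) :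
    groupAlgebraAdams R A n (AddMonoidAlgebra.single a r) = AddMonoidAlgebra.single (n • a) r :=
  AddMonoidAlgebra.mapDomainLinearMap_single _ _ _

theorem groupAlgebraMulAdams_tmul (n : ℕ) (x y : AddMonoidAlgebra R A) :
    groupAlgebraMulAdams R A n (x ⊗ₜ[R] y) = x * groupAlgebraAdams R A n y := by
  simp [groupAlgebraMulAdams]

theorem groupAlgebraCounit_single (a : A) (r : R) :
    groupAlgebraCounit R A (AddMonoidAlgebra.single a r) = r := by
  simp [groupAlgebraCounit]

theorem groupAlgebraCounit_zero : groupAlgebraCounit R A 0 = 0 := by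
  simp [groupAlgebraCounit]

theorem groupAlgebraCounit_add (x y : AddMonoidAlgebra R A) :
    groupAlgebraCounit R A (x + y) = groupAlgebraCounit R A x + groupAlgebraCounit R A y :=
  Finsupp.sum_add_index' (fun _ => rfl) (fun _ _ _ => rfl)

theorem groupAlgebraComul_single (a : A) (r : R) :
    groupAlgebraComul R A (AddMonoidAlgebra.single a r) =
      r • (AddMonoidAlgebra.single a 1 ⊗ₜ[R] AddMonoidAlgebra.single a (1 : R)) :=
  Finsupp.sum_single_index (zero_smul R _)

theorem groupAlgebraComul_zero : groupAlgebraComul R A 0 = 0 := by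
  simp [groupAlgebraComul]

theorem groupAlgebraComul_add (x y : AddMonoidAlgebra R A) :
    groupAlgebraComul R A (x + y) = groupAlgebraComul R A x + groupAlgebraComul R A y :=
  Finsupp.sum_add_index' (fun _ => zero_smul R _) (fun _ r s => add_smul r s _)

theorem groupAlgebraMulAdams_comul (n : ℕ) (x : AddMonoidAlgebra R A) :
    groupAlgebraMulAdams R A n (groupAlgebraComul R A x) = groupAlgebraAdams R A (n + 1) x := by
  induction x using AddMonoidAlgebra.induction_linear with
  | zero => simp [groupAlgebraComul_zero]
  | add x y hx hy => rw [groupAlgebraComul_add, map_add, hx, hy, map_add]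
  | single a r =>
    rw [groupAlgebraComul_single, map_smul, groupAlgebraMulAdams_tmul, groupAlgebraAdams_single,
      groupAlgebraAdams_single, AddMonoidAlgebra.single_mul_single, one_mul, ← succ_nsmul',
      AddMonoidAlgebra.smul_single', mul_one]

theorem groupAlgebraAdams_of_nsmul_eq_zero {n : ℕ} (hn : ∀ a : A, n • a = 0)
    (x : AddMonoidAlgebra R A) :
    groupAlgebraAdams R A n x = AddMonoidAlgebra.single 0 (groupAlgebraCounit R A x) := by
  induction x using AddMonoidAlgebra.induction_linear with
  | zero => simp [groupAlgebraCounit_zero]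
  | add x y hx hy => rw [map_add, hx, hy, groupAlgebraCounit_add, AddMonoidAlgebra.single_add]
  | single a r => rw [groupAlgebraAdams_single, groupAlgebraCounit_single, hn a]

variable {I : Ideal (AddMonoidAlgebra R A)}

theorem groupAlgebraMulAdams_mem {n : ℕ} (hI : ∀ y ∈ I, groupAlgebraAdams R A n y ∈ I)
    {t : AddMonoidAlgebra R A ⊗[R] AddMonoidAlgebra R A}
    (ht : t ∈ groupAlgebraMixedTensor R A I) : groupAlgebraMulAdams R A n t ∈ I := by
  suffices groupAlgebraMixedTensor R A I ≤
      (I.restrictScalars R).comap (groupAlgebraMulAdams R A n) from this ht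
  rw [groupAlgebraMixedTensor, Submodule.span_le]
  rintro t (⟨a, ha, b, rfl⟩ | ⟨a, b, hb, rfl⟩) <;>
    simp only [SetLike.mem_coe, Submodule.mem_comap, groupAlgebraMulAdams_tmul,
      Submodule.restrictScalars_mem]
  · exact I.mul_mem_right _ ha
  · exact I.mul_mem_left _ (hI b hb)

theorem groupAlgebraAdams_mem (hcounit : ∀ x ∈ I, groupAlgebraCounit R A x = 0)
    (hcomul : ∀ x ∈ I, groupAlgebraComul R A x ∈ groupAlgebraMixedTensor R A I) (n : ℕ) :
    ∀ y ∈ I, groupAlgebraAdams R A n y ∈ I := by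
  induction n with
  | zero =>
    intro y hy
    simp [groupAlgebraAdams_of_nsmul_eq_zero (zero_nsmul (M := A)), hcounit y hy]
  | succ n ih =>
    intro y hy
    rw [← groupAlgebraMulAdams_comul]
    exact groupAlgebraMulAdams_mem ih (hcomul y hy)

theorem groupAlgebraAdams_sub_pow_mem (hcounit : ∀ x ∈ I, groupAlgebraCounit R A x = 0)
    (hcomul : ∀ x ∈ I, groupAlgebraComul R A x ∈ groupAlgebraMixedTensor R A I)
    {g : AddMonoidAlgebra R A} (hg1 : groupAlgebraCounit R A g = 1)
    (hggl : groupAlgebraComul R A g - g ⊗ₜ[R] g ∈ groupAlgebraMixedTensor R A I) (n : ℕ) :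
    groupAlgebraAdams R A n g - g ^ n ∈ I := by
  induction n with
  | zero =>
    rw [groupAlgebraAdams_of_nsmul_eq_zero (zero_nsmul (M := A)), hg1, pow_zero,
      ← AddMonoidAlgebra.one_def, sub_self]
    exact I.zero_mem
  | succ n ih =>
    have hmul := groupAlgebraMulAdams_mem (groupAlgebraAdams_mem hcounit hcomul n) hggl
    rw [map_sub, groupAlgebraMulAdams_comul, groupAlgebraMulAdams_tmul] at hmul
    convert I.add_mem hmul (I.mul_mem_left g ih) using 1
    ring

theorem groupAlgebra_pow_sub_one_mem_of_nsmul_eq_zero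
    (hcounit : ∀ x ∈ I, groupAlgebraCounit R A x = 0)
    (hcomul : ∀ x ∈ I, groupAlgebraComul R A x ∈ groupAlgebraMixedTensor R A I)
    {g : AddMonoidAlgebra R A} (hg1 : groupAlgebraCounit R A g = 1)
    (hggl : groupAlgebraComul R A g - g ⊗ₜ[R] g ∈ groupAlgebraMixedTensor R A I)
    {n : ℕ} (hn : ∀ a : A, n • a = 0) : g ^ n - 1 ∈ I := by
  have h := groupAlgebraAdams_sub_pow_mem hcounit hcomul hg1 hggl n
  rw [groupAlgebraAdams_of_nsmul_eq_zero hn, hg1, ← AddMonoidAlgebra.one_def] at h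
  rwa [← neg_mem_iff, neg_sub]

end GroupAlgebra

theorem isUnit_add_of_mem_jacobson_bot {S : Type*} [CommRing S] {u z : S} (hu : IsUnit u)
    (hz : z ∈ (⊥ : Ideal S).jacobson) : IsUnit (u + z) := by
  obtain ⟨v, rfl⟩ := hu
  convert (Ideal.mem_jacobson_bot.mp hz ↑v⁻¹).mul v.isUnit using 1
  rw [add_mul, mul_assoc, Units.inv_mul, mul_one, one_mul, add_comm]

theorem IsLocalRing.map_maximalIdeal_le_jacobson_bot (R S : Type*) [CommRing R] [IsLocalRing R]
    [CommRing S] [Algebra R S] [Algebra.IsIntegral R S] :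
    (maximalIdeal R).map (algebraMap R S) ≤ (⊥ : Ideal S).jacobson := by
  refine le_sInf fun M ⟨_, hM⟩ => Ideal.map_le_iff_le_comap.mpr ?_
  exact (eq_maximalIdeal (Ideal.isMaximal_comap_of_isIntegral_of_isMaximal M)).ge

theorem Ideal.sub_one_mem_of_pow_sub_one_mem {S : Type*} [CommRing S] {I J : Ideal S}
    (hJ : J ≤ (⊥ : Ideal S).jacobson) {n : ℕ} (hn : IsUnit (n : S)) {g : S}
    (hgJ : g - 1 ∈ J + I) (hgn : g ^ n - 1 ∈ I) : g - 1 ∈ I := by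
  obtain ⟨s, hs, t, ht, hst⟩ := Submodule.mem_sup.mp hgJ
  obtain ⟨w, hw⟩ := sq_dvd_add_pow_sub_sub (g - 1) 1 n
  -- `g ^ n - 1 = (g - 1) * (n + (g - 1) * w)`, and the `t`-part of the second factor lies in `I`
  have hmem : (g - 1) * (n + s * w) ∈ I := by
    convert I.sub_mem hgn (I.mul_mem_left ((g - 1) * w) ht) using 1
    linear_combination (g - 1) * w * hst - hw
  exact (I.mul_unit_mem_iff_mem (isUnit_add_of_mem_jacobson_bot hn
    (hJ (J.mul_mem_right w hs)))).mp hmem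

/-- Let `(R, m)` be a local ring and `A` a finite abelian group whose order is invertible in
`R`.  Let `I ⊆ R[A]` be an ideal with `ε(I) = 0` and `Δ(I) ⊆ I ⊗ R[A] + R[A] ⊗ I`.  If
`g ∈ R[A]` satisfies `ε(g) = 1`, `Δ(g) − g ⊗ g ∈ I ⊗ R[A] + R[A] ⊗ I`, and
`g − 1 ∈ m·R[A] + I`, then `g − 1 ∈ I`:  the only group-like element of `R[A]/I` congruent
to `1` modulo `m` is `1`. -/
theorem stacky_covers_grouplike_congruent_one (R A : Type*) [CommRing R] [IsLocalRing R]
    [AddCommGroup A] [Fintype A] (hd : IsUnit ((Fintype.card A : R)))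
    (I : Ideal (AddMonoidAlgebra R A))
    (hcounit : ∀ x ∈ I, groupAlgebraCounit R A x = 0)
    (hcomul : ∀ x ∈ I, groupAlgebraComul R A x ∈ groupAlgebraMixedTensor R A I)
    (g : AddMonoidAlgebra R A)
    (hg1 : groupAlgebraCounit R A g = 1)
    (hggl : groupAlgebraComul R A g - g ⊗ₜ[R] g ∈ groupAlgebraMixedTensor R A I)
    (hgm : g - 1 ∈
      Ideal.map (algebraMap R (AddMonoidAlgebra R A)) (IsLocalRing.maximalIdeal R) + I) :
    g - 1 ∈ I := by
  have hpow : g ^ Fintype.card A - 1 ∈ I :=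
    groupAlgebra_pow_sub_one_mem_of_nsmul_eq_zero hcounit hcomul hg1 hggl
      fun _ => card_nsmul_eq_zero
  have hd' : IsUnit ((Fintype.card A : AddMonoidAlgebra R A)) := by
    simpa using hd.map (algebraMap R (AddMonoidAlgebra R A))
  exact Ideal.sub_one_mem_of_pow_sub_one_mem
    (IsLocalRing.map_maximalIdeal_le_jacobson_bot R _) hd' hgm hpow
end

section
/- Let P and Q be commutative monoids (written additively), A an abelian group, γ : P → Q an injective monoid homomorphism, m : Q → A a monoid homomorphism with m ∘ γ = 0, and ι : A → Q a function with ι(0) = 0 and m ∘ ι = id_A, such that the map φ : P × A → Q, (p, λ) ↦ γ(p) + ι(λ), is a bijection. Then for every λ, λ' ∈ A there is a unique element f(λ, λ') ∈ P with γ(f(λ, λ')) + ι(λ + λ') = ι(λ) + ι(λ'), and the resulting function f : A × A → P is a commutative 2-cocycle of A with values in P. -/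
/-- Given a free extension `0 → P → Q → A → 0` of an abelian group `A` by a commutative
monoid `P` with basis `ι(A)`, for every `λ, λ'` there is a unique `f (λ, λ') ∈ P` with
`γ (f (λ, λ')) + ι (λ + λ') = ι λ + ι λ'`, and the resulting function `f : A × A → P` is a
commutative 2-cocycle of `A` with values in `P`. -/
theorem stacky_covers_free_extension_gives_cocycle (P Q A : Type*) [AddCommMonoid P]
    [AddCommMonoid Q] [AddCommGroup A] (γ : P →+ Q) (m : Q →+ A) (ι : A → Q)
    (hγ : Function.Injective γ)
    (hmγ : ∀ p : P, m (γ p) = 0)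
    (hι0 : ι 0 = 0)
    (hmι : ∀ lam : A, m (ι lam) = lam)
    (hfree : Function.Bijective (fun x : P × A => γ x.1 + ι x.2)) :
    (∀ lam lam' : A, ∃! p : P, γ p + ι (lam + lam') = ι lam + ι lam') ∧
    ∀ f : A × A → P,
      (∀ lam lam' : A, γ (f (lam, lam')) + ι (lam + lam') = ι lam + ι lam') →
      (∀ lam : A, f (0, lam) = 0) ∧
      (∀ lam lam' : A, f (lam, lam') = f (lam', lam)) ∧
      (∀ lam lam' lam'' : A,
        f (lam, lam') + f (lam + lam', lam'') = f (lam', lam'') + f (lam' + lam'', lam)) := by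
  obtain ⟨hinj, hsurj⟩ := hfree
  have key : ∀ (p p' : P) (a : A), γ p + ι a = γ p' + ι a → p = p' := by
    intro p p' a h
    have : (p, a) = (p', a) := hinj h
    exact (Prod.mk.injEq _ _ _ _ ▸ this).1
  constructor
  · intro lam lam'
    obtain ⟨⟨p, μ⟩, hp⟩ := hsurj (ι lam + ι lam')
    simp only at hp
    have hμ : μ = lam + lam' := by
      have := congrArg m hp
      simpa [hmγ, hmι] using this
    subst hμ
    exact ⟨p, hp, fun q hq => key q p _ (hq.trans hp.symm)⟩
  · intro f hf
    refine ⟨fun lam => ?_, fun lam lam' => ?_, fun lam lam' lam'' => ?_⟩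
    · apply key _ _ (0 + lam)
      rw [hf 0 lam, hι0, map_zero, zero_add, zero_add, zero_add]
    · apply key _ _ (lam + lam')
      rw [hf, add_comm lam lam', hf, add_comm (ι lam)]
    · apply key _ _ (lam + lam' + lam'')
      rw [map_add, map_add]
      have h1 : γ (f (lam, lam')) + γ (f (lam + lam', lam'')) + ι (lam + lam' + lam'')
          = ι lam + ι lam' + ι lam'' := by
        calc γ (f (lam, lam')) + γ (f (lam + lam', lam'')) + ι (lam + lam' + lam'')
            = γ (f (lam, lam')) + (γ (f (lam + lam', lam'')) + ι (lam + lam' + lam'')) := by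
              rw [add_assoc]
          _ = γ (f (lam, lam')) + (ι (lam + lam') + ι lam'') := by rw [hf]
          _ = (γ (f (lam, lam')) + ι (lam + lam')) + ι lam'' := by rw [add_assoc]
          _ = ι lam + ι lam' + ι lam'' := by rw [hf]
      have h2 : γ (f (lam', lam'')) + γ (f (lam' + lam'', lam)) + ι (lam + lam' + lam'')
          = ι lam + ι lam' + ι lam'' := by
        calc γ (f (lam', lam'')) + γ (f (lam' + lam'', lam)) + ι (lam + lam' + lam'')
            = γ (f (lam', lam'')) + (γ (f (lam' + lam'', lam)) + ι (lam' + lam'' + lam)) := by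
              rw [show lam + lam' + lam'' = lam' + lam'' + lam from by abel, add_assoc]
          _ = γ (f (lam', lam'')) + (ι (lam' + lam'') + ι lam) := by rw [hf]
          _ = (γ (f (lam', lam'')) + ι (lam' + lam'')) + ι lam := by rw [add_assoc]
          _ = ι lam' + ι lam'' + ι lam := by rw [hf]
          _ = ι lam + ι lam' + ι lam'' := by abel
      rw [h1, h2]
end

section
/- Let A be a finite abelian group, P a commutative monoid (written additively), and f : A × A → P a commutative 2-cocycle; let Q = P ×_f A be the twisted product and γ : P → Q, p ↦ (p, 0), the canonical inclusion. Then γ is a Kummer homomorphism: it is injective, and for every (p, λ) ∈ Q, letting n ≥ 1 be the order of λ in A, one has n·(p, λ) = γ( n·p + f(λ, λ) + f(2λ, λ) + ⋯ + f((n−1)λ, λ) ); in particular every element of Q has a positive multiple lying in the image of γ. Moreover the action of P on Q by p · q = γ(p) + q is free with basis {(0, λ) : λ ∈ A}. -/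
/-- A type synonym for the underlying set of the twisted product `P ×_f A`. -/
structure TwistedProd (P A : Type*) where
  fst : P
  snd : A

/-- Let `f : A × A → P` be a commutative 2-cocycle of a finite abelian group `A` with values
in a commutative monoid `P`, and let `Q = P ×_f A` be the twisted product, with canonical
inclusion `γ : p ↦ (p, 0)`.  Then `γ` is injective; for every `(p, λ)`, with `n ≥ 1` the
order of `λ`, `n • (p, λ) = γ (n • p + f (λ, λ) + f (2λ, λ) + ⋯ + f ((n-1)λ, λ))`, so that
every element of `Q` has a positive multiple in the image of `γ` (`γ` is Kummer); and the
action of `P` on `Q` by `p • q = γ p + q` is free with basis `{(0, λ) : λ ∈ A}`. -/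
theorem stacky_covers_twisted_product_kummer_free (P A : Type*) [AddCommMonoid P]
    [AddCommGroup A] [Fintype A] (f : A × A → P)
    (hf0 : ∀ lam : A, f (0, lam) = 0)
    (hfc : ∀ lam lam' : A, f (lam, lam') = f (lam', lam))
    (hfa : ∀ lam lam' lam'' : A,
      f (lam, lam') + f (lam + lam', lam'') = f (lam', lam'') + f (lam' + lam'', lam))
    [AddCommMonoid (TwistedProd P A)]
    (hadd : ∀ x y : TwistedProd P A,
      x + y = ⟨x.fst + y.fst + f (x.snd, y.snd), x.snd + y.snd⟩)
    (hzero : (0 : TwistedProd P A) = ⟨0, 0⟩) :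
    -- `γ` is injective
    Function.Injective (fun p : P => (⟨p, 0⟩ : TwistedProd P A)) ∧
    -- the explicit Kummer formula, with `n = addOrderOf λ ≥ 1` the order of `λ`
    (∀ (p : P) (lam : A), 1 ≤ addOrderOf lam ∧
      addOrderOf lam • (⟨p, lam⟩ : TwistedProd P A) =
        ⟨addOrderOf lam • p +
          ∑ i ∈ Finset.range (addOrderOf lam - 1), f ((i + 1) • lam, lam), 0⟩) ∧
    -- every element of `Q` has a positive multiple in the image of `γ`
    (∀ q : TwistedProd P A, ∃ n : ℕ, 1 ≤ n ∧ ∃ p : P, n • q = ⟨p, 0⟩) ∧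
    -- the action of `P` on `Q` is free with basis `{(0, λ) : λ ∈ A}`
    Function.Bijective
      (fun x : P × A => (⟨x.1, 0⟩ : TwistedProd P A) + ⟨0, x.2⟩) := by
  have key : ∀ (p : P) (lam : A) (n : ℕ), 1 ≤ n →
      n • (⟨p, lam⟩ : TwistedProd P A) =
        ⟨n • p + ∑ i ∈ Finset.range (n - 1), f ((i + 1) • lam, lam), n • lam⟩ := by
    intro p lam n hn
    induction n with
    | zero => omega
    | succ n ih =>
      rcases Nat.eq_or_lt_of_le hn with h1 | h1
      · simp [← h1, one_nsmul]
      · have hn' : 1 ≤ n := by omega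
        rw [succ_nsmul, ih hn', hadd]
        have hrange : n - 1 + 1 = n := by omega
        have : ∑ i ∈ Finset.range (n + 1 - 1), f ((i + 1) • lam, lam) =
            (∑ i ∈ Finset.range (n - 1), f ((i + 1) • lam, lam)) + f (n • lam, lam) := by
          rw [show n + 1 - 1 = (n - 1) + 1 from by omega, Finset.sum_range_succ, hrange]
        simp only [this]
        congr 1
        · rw [succ_nsmul]
          abel
        · rw [succ_nsmul]
  refine ⟨?_, ?_, ?_, ?_⟩
  · intro a b h
    exact congrArg TwistedProd.fst h
  · intro p lam
    have hpos : 1 ≤ addOrderOf lam := addOrderOf_pos lam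
    refine ⟨hpos, ?_⟩
    rw [key p lam _ hpos, addOrderOf_nsmul_eq_zero lam]
  · rintro ⟨p, lam⟩
    have hpos : 1 ≤ addOrderOf lam := addOrderOf_pos lam
    refine ⟨addOrderOf lam, hpos, ?_⟩
    rw [key p lam _ hpos, addOrderOf_nsmul_eq_zero lam]
    exact ⟨_, rfl⟩
  · have heq : (fun x : P × A => (⟨x.1, 0⟩ : TwistedProd P A) + ⟨0, x.2⟩) =
        fun x : P × A => ⟨x.1, x.2⟩ := by
      funext x
      rw [hadd]
      simp [hf0]
    rw [heq]
    constructor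
    · rintro ⟨a, b⟩ ⟨c, d⟩ h
      simp only [TwistedProd.mk.injEq] at h
      exact Prod.ext h.1 h.2
    · rintro ⟨p, lam⟩
      exact ⟨(p, lam), rfl⟩
end

section
/- Let A be a finite abelian group. Let G be the quotient of the free abelian group ⊕_{λ ∈ A} ℤ·e_λ by the subgroup generated by e_0, and write ē_λ ∈ G for the image of e_λ. Let P_A^{int} ⊆ G be the submonoid generated by { ē_λ + ē_{λ'} − ē_{λ+λ'} : λ, λ' ∈ A } and let Q_A^{int} ⊆ G be the submonoid generated by P_A^{int} together with { ē_λ : λ ∈ A }. Then P_A^{int} and Q_A^{int} are finitely generated and sharp: if x and −x both lie in P_A^{int} (respectively in Q_A^{int}), then x = 0. -/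
/-- The quotient `G = (⊕_{λ ∈ A} ℤ·e_λ) / ⟨e_0⟩` of the free abelian group on `A` by the
subgroup generated by `e_0`. -/
abbrev UnivGrp (A : Type*) [AddCommGroup A] :=
  (A →₀ ℤ) ⧸ Submodule.span ℤ {Finsupp.single (0 : A) (1 : ℤ)}

/-- The image `ē_λ ∈ G` of the basis element `e_λ`. -/
noncomputable def ebar {A : Type*} [AddCommGroup A] (a : A) : UnivGrp A :=
  Submodule.Quotient.mk (Finsupp.single a (1 : ℤ))

/-- The integral monoid `P_A^{int} ⊆ G`, generated by the elements
`ē_λ + ē_{λ'} − ē_{λ+λ'}`. -/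
noncomputable def univPAint (A : Type*) [AddCommGroup A] : AddSubmonoid (UnivGrp A) :=
  AddSubmonoid.closure {x : UnivGrp A | ∃ a b : A, x = ebar a + ebar b - ebar (a + b)}

/-- The integral monoid `Q_A^{int} ⊆ G`, generated by `P_A^{int}` together with the classes
`ē_λ`. -/
noncomputable def univQAint (A : Type*) [AddCommGroup A] : AddSubmonoid (UnivGrp A) :=
  AddSubmonoid.closure
    ({x : UnivGrp A | ∃ a b : A, x = ebar a + ebar b - ebar (a + b)} ∪
      {x : UnivGrp A | ∃ a : A, x = ebar a})

section Aux

variable {A : Type*} [AddCommGroup A]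

open Classical in
/-- The weight function: `0 ↦ 0`, everything else `↦ 1`. -/
noncomputable def univWeight (a : A) : ℤ := if a = 0 then 0 else 1

lemma univWeight_zero : univWeight (0 : A) = 0 := by simp [univWeight]

lemma univWeight_nonneg (a : A) : 0 ≤ univWeight a := by
  classical
  unfold univWeight
  split <;> norm_num

/-- The linear functional `G → ℤ`, `ē_a ↦ univWeight a`. -/
noncomputable def univPhi : UnivGrp A →ₗ[ℤ] ℤ :=
  Submodule.liftQ _ (Finsupp.linearCombination ℤ univWeight) (by
    rw [Submodule.span_le]
    intro x hx
    rcases hx with rfl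
    simp [LinearMap.mem_ker, Finsupp.linearCombination_single, univWeight_zero])

lemma univPhi_ebar (a : A) : univPhi (ebar a) = univWeight a := by
  simp [univPhi, ebar, Submodule.liftQ_apply, Finsupp.linearCombination_single]

lemma ebar_zero : (ebar (0 : A)) = 0 := by
  simp only [ebar]
  rw [Submodule.Quotient.mk_eq_zero]
  exact Submodule.mem_span_singleton_self _

/-- The "sharp cone" submonoid associated to `univPhi`. -/
noncomputable def sharpCone (A : Type*) [AddCommGroup A] : AddSubmonoid (UnivGrp A) where
  carrier := {x | 0 ≤ univPhi x ∧ (univPhi x = 0 → x = 0)}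
  zero_mem' := by simp
  add_mem' := by
    rintro x y ⟨hx1, hx2⟩ ⟨hy1, hy2⟩
    refine ⟨by simpa using add_nonneg hx1 hy1, fun h => ?_⟩
    rw [map_add] at h
    have hx0 : univPhi x = 0 := le_antisymm (by linarith) hx1
    have hy0 : univPhi y = 0 := le_antisymm (by linarith) hy1
    rw [hx2 hx0, hy2 hy0, add_zero]

lemma gen_mem_sharpCone_P {x : UnivGrp A}
    (hx : ∃ a b : A, x = ebar a + ebar b - ebar (a + b)) : x ∈ sharpCone A := by
  classical
  obtain ⟨a, b, rfl⟩ := hx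
  constructor
  · simp only [map_sub, map_add, univPhi_ebar, univWeight]
    rcases eq_or_ne a 0 with rfl | ha <;> rcases eq_or_ne b 0 with rfl | hb <;>
      simp_all <;> split <;> norm_num
  · intro h
    simp only [map_sub, map_add, univPhi_ebar, univWeight] at h
    rcases eq_or_ne a 0 with rfl | ha
    · simp [ebar_zero]
    rcases eq_or_ne b 0 with rfl | hb
    · simp [ebar_zero]
    exfalso
    simp only [if_neg ha, if_neg hb] at h
    split at h <;> norm_num at h

lemma gen_mem_sharpCone_Q {x : UnivGrp A} (hx : ∃ a : A, x = ebar a) :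
    x ∈ sharpCone A := by
  classical
  obtain ⟨a, rfl⟩ := hx
  constructor
  · simp [univPhi_ebar, univWeight_nonneg]
  · intro h
    rw [univPhi_ebar, univWeight] at h
    split at h
    · subst ‹a = 0›; exact ebar_zero
    · norm_num at h

lemma univQAint_le_sharpCone : univQAint A ≤ sharpCone A := by
  rw [univQAint, AddSubmonoid.closure_le]
  rintro x (hx | hx)
  · exact gen_mem_sharpCone_P hx
  · exact gen_mem_sharpCone_Q hx

lemma univPAint_le_sharpCone : univPAint A ≤ sharpCone A := by
  rw [univPAint, AddSubmonoid.closure_le]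
  exact fun x hx => gen_mem_sharpCone_P hx

lemma sharp_of_le_sharpCone {M : AddSubmonoid (UnivGrp A)} (hM : M ≤ sharpCone A)
    {x : UnivGrp A} (hx : x ∈ M) (hx' : -x ∈ M) : x = 0 := by
  obtain ⟨h1, h2⟩ := hM hx
  obtain ⟨h1', _⟩ := hM hx'
  rw [map_neg] at h1'
  exact h2 (le_antisymm (by linarith) h1)

end Aux

/-- For a finite abelian group `A`, the monoids `P_A^{int}` and `Q_A^{int}` are finitely
generated and sharp: if `x` and `-x` both lie in the monoid then `x = 0`. -/
theorem stacky_covers_PAint_QAint_fine_sharp (A : Type*) [AddCommGroup A] [Fintype A] :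
    (univPAint A).FG ∧ (univQAint A).FG ∧
    (∀ x : UnivGrp A, x ∈ univPAint A → -x ∈ univPAint A → x = 0) ∧
    (∀ x : UnivGrp A, x ∈ univQAint A → -x ∈ univQAint A → x = 0) := by
  have hPfin : ({x : UnivGrp A | ∃ a b : A, x = ebar a + ebar b - ebar (a + b)}).Finite := by
    have : {x : UnivGrp A | ∃ a b : A, x = ebar a + ebar b - ebar (a + b)} =
        (fun p : A × A => ebar p.1 + ebar p.2 - ebar (p.1 + p.2)) '' Set.univ := by
      ext x
      simp [eq_comm]
    rw [this]
    exact (Set.finite_univ).image _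
  have hEfin : ({x : UnivGrp A | ∃ a : A, x = ebar a}).Finite := by
    have : {x : UnivGrp A | ∃ a : A, x = ebar a} = ebar '' Set.univ := by
      ext x; simp [eq_comm]
    rw [this]
    exact (Set.finite_univ).image _
  refine ⟨?_, ?_, ?_, ?_⟩
  · exact (AddSubmonoid.fg_iff _).mpr ⟨_, rfl, hPfin⟩
  · exact (AddSubmonoid.fg_iff _).mpr ⟨_, rfl, hPfin.union hEfin⟩
  · exact fun x hx hx' => sharp_of_le_sharpCone univPAint_le_sharpCone hx hx'
  · exact fun x hx hx' => sharp_of_le_sharpCone univQAint_le_sharpCone hx hx'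
end

section
/- Let A be a finite abelian group, P_A the quotient of the free commutative monoid on A × A by the congruence generated by e_{λ,λ'} ∼ e_{λ',λ}, e_{0,λ} ∼ 0, and e_{λ,λ'} + e_{λ+λ',λ''} ∼ e_{λ',λ''} + e_{λ'+λ'',λ}, and Q_A = P_A ×_e A the twisted product with respect to the universal 2-cocycle e. Then P_A and Q_A are finitely generated, quasi-integral (x + y = x implies y = 0), and sharp (x + y = 0 implies x = y = 0). -/
/-- The generating relations of the congruence defining the universal monoid `P_A`:
`e_{λ,λ'} ∼ e_{λ',λ}`, `e_{0,λ} ∼ 0`, and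
`e_{λ,λ'} + e_{λ+λ',λ''} ∼ e_{λ',λ''} + e_{λ'+λ'',λ}`. -/
def univPARel (A : Type*) [AddCommGroup A] :
    ((A × A) →₀ ℕ) → ((A × A) →₀ ℕ) → Prop := fun x y =>
  (∃ a b : A, x = Finsupp.single (a, b) 1 ∧ y = Finsupp.single (b, a) 1) ∨
  (∃ a : A, x = Finsupp.single ((0 : A), a) 1 ∧ y = 0) ∨
  (∃ a b c : A, x = Finsupp.single (a, b) 1 + Finsupp.single (a + b, c) 1 ∧
      y = Finsupp.single (b, c) 1 + Finsupp.single (b + c, a) 1)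

/-- The universal monoid `P_A`: the quotient of the free commutative monoid on `A × A` by
the congruence generated by `univPARel A`. -/
abbrev UnivPA (A : Type*) [AddCommGroup A] :=
  (addConGen (univPARel A)).Quotient

/-- The class of `e_{λ,λ'}` in `P_A`; `(λ, λ') ↦ e_{λ,λ'}` is the universal
2-cocycle. -/
noncomputable def univPAGen {A : Type*} [AddCommGroup A] (a b : A) : UnivPA A :=
  (addConGen (univPARel A)).mk' (Finsupp.single (a, b) 1)

/-!
Let `s(λ) ∈ {0, 1}` indicate `λ ≠ 0` and `w(λ, λ') = s(λ) + s(λ') - s(λ + λ')`. Since `s` is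
subadditive, `w` is an `ℕ`-valued commutative 2-cocycle, and it vanishes only when `λ = 0` or
`λ' = 0`, i.e. only on generators `e_{λ,λ'}` that are already `0` in `P_A`. Hence the induced
homomorphism `P_A → ℕ` vanishes only at `0`, and so does `(p, λ) ↦ w(p) + s(λ)` on `Q_A`, which is
additive because `w` is the coboundary of `s`. A monoid admitting such a homomorphism to `ℕ` is
quasi-integral and sharp. Finite generation holds because `P_A` is generated by the `e_{λ,λ'}`,
and `Q_A` by these (placed at `λ = 0`) together with the elements `(0, λ)`.
-/

section NatHom

variable {M : Type*} [AddMonoid M] (φ : M →+ ℕ) (hφ : ∀ x, φ x = 0 → x = 0)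
include hφ

theorem eq_zero_of_add_eq_self_of_natHom {x y : M} (h : x + y = x) : y = 0 :=
  hφ y (by simpa using congrArg φ h)

theorem eq_zero_of_add_eq_zero_of_natHom {x y : M} (h : x + y = 0) : x = 0 ∧ y = 0 := by
  have hsum : φ x + φ y = 0 := by rw [← map_add, h, map_zero]
  exact ⟨hφ x (by omega), hφ y (by omega)⟩

end NatHom

theorem Finsupp.closure_range_single_one (α : Type*) :
    AddSubmonoid.closure (Set.range fun a : α => Finsupp.single a (1 : ℕ)) = ⊤ := by
  refine eq_top_iff.2 <| Finsupp.add_closure_setOfPred_eq_single (α := α) (M := ℕ) ▸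
    AddSubmonoid.closure_le.2 ?_
  rintro _ ⟨a, n, rfl⟩
  rw [← Finsupp.smul_single_one]
  exact nsmul_mem (AddSubmonoid.subset_closure (Set.mem_range_self a)) n

section UnivPA

variable {A : Type*} [AddCommGroup A]

structure IsCommCocycle {N : Type*} [AddCommMonoid N] (c : A → A → N) : Prop where
  comm : ∀ a b, c a b = c b a
  zero_left : ∀ a, c 0 a = 0
  cocycle : ∀ a b d, c a b + c (a + b) d = c b d + c (b + d) a

theorem univPAGen_comm (a b : A) : univPAGen a b = univPAGen b a :=
  (AddCon.eq _).2 (AddConGen.Rel.of _ _ (Or.inl ⟨a, b, rfl, rfl⟩))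

theorem univPAGen_zero_left (a : A) : univPAGen 0 a = 0 :=
  (AddCon.eq _).2 (AddConGen.Rel.of _ _ (Or.inr (Or.inl ⟨a, rfl, rfl⟩)))

theorem univPAGen_zero_right (a : A) : univPAGen a 0 = 0 := by
  rw [univPAGen_comm, univPAGen_zero_left]

theorem closure_range_univPAGen :
    AddSubmonoid.closure (Set.range fun p : A × A => univPAGen p.1 p.2) = ⊤ := by
  rw [← AddCon.mrange_mk' (c := addConGen (univPARel A)), AddMonoidHom.mrange_eq_map,
    ← Finsupp.closure_range_single_one, AddMonoidHom.map_mclosure, ← Set.range_comp]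
  rfl

instance [Finite A] : AddMonoid.FG (UnivPA A) :=
  AddMonoid.fg_iff.2 ⟨_, closure_range_univPAGen, Set.finite_range _⟩

variable {N : Type*} [AddCommMonoid N] {c : A → A → N}

noncomputable def IsCommCocycle.univPALift (hc : IsCommCocycle c) : UnivPA A →+ N :=
  (addConGen (univPARel A)).lift (Finsupp.liftAddHom fun p => multiplesHom N (c p.1 p.2)) <|
    AddCon.addConGen_le.2 <| by
      rintro x y (⟨a, b, rfl, rfl⟩ | ⟨a, rfl, rfl⟩ | ⟨a, b, d, rfl, rfl⟩)
      · simpa using hc.comm a b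
      · simpa using hc.zero_left a
      · simpa using hc.cocycle a b d

theorem IsCommCocycle.univPALift_univPAGen (hc : IsCommCocycle c) (a b : A) :
    hc.univPALift (univPAGen a b) = c a b := by
  simp [univPALift, univPAGen]

end UnivPA

section Weight

variable {A : Type*} [AddCommGroup A]

open Classical in
noncomputable def nonzeroIndicator (a : A) : ℕ := if a = 0 then 0 else 1

theorem nonzeroIndicator_eq_zero_iff {a : A} : nonzeroIndicator a = 0 ↔ a = 0 := by
  unfold nonzeroIndicator; split_ifs <;> simp_all

theorem nonzeroIndicator_add_le (a b : A) :
    nonzeroIndicator (a + b) ≤ nonzeroIndicator a + nonzeroIndicator b := by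
  unfold nonzeroIndicator; split_ifs <;> simp_all

/-- The coboundary of `nonzeroIndicator`; the subtraction never truncates, by
`nonzeroIndicator_add_le`. -/
noncomputable def cocycleWeight (a b : A) : ℕ :=
  nonzeroIndicator a + nonzeroIndicator b - nonzeroIndicator (a + b)

theorem cocycleWeight_add_nonzeroIndicator (a b : A) :
    cocycleWeight a b + nonzeroIndicator (a + b) = nonzeroIndicator a + nonzeroIndicator b :=
  Nat.sub_add_cancel (nonzeroIndicator_add_le a b)

theorem cocycleWeight_eq_zero_iff {a b : A} : cocycleWeight a b = 0 ↔ a = 0 ∨ b = 0 := by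
  unfold cocycleWeight nonzeroIndicator; split_ifs <;> simp_all

theorem isCommCocycle_cocycleWeight : IsCommCocycle (cocycleWeight (A := A)) where
  comm a b := by rw [cocycleWeight, cocycleWeight, add_comm a, add_comm (nonzeroIndicator a)]
  zero_left a := cocycleWeight_eq_zero_iff.2 (Or.inl rfl)
  cocycle a b d := by
    have hab := cocycleWeight_add_nonzeroIndicator a b
    have habd := cocycleWeight_add_nonzeroIndicator (a + b) d
    have hbd := cocycleWeight_add_nonzeroIndicator b d
    have hbda := cocycleWeight_add_nonzeroIndicator (b + d) a
    rw [show a + b + d = b + d + a by abel] at habd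
    omega

noncomputable def univPAWeight : UnivPA A →+ ℕ := isCommCocycle_cocycleWeight.univPALift

theorem univPAWeight_univPAGen (a b : A) : univPAWeight (univPAGen a b) = cocycleWeight a b :=
  isCommCocycle_cocycleWeight.univPALift_univPAGen a b

theorem eq_zero_of_univPAWeight_eq_zero {q : UnivPA A} (h : univPAWeight q = 0) : q = 0 := by
  have hq : q ∈ AddSubmonoid.closure (Set.range fun p : A × A => univPAGen p.1 p.2) :=
    (closure_range_univPAGen (A := A)).symm ▸ AddSubmonoid.mem_top q
  induction hq using AddSubmonoid.closure_induction with
  | mem _ hx =>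
    obtain ⟨⟨a, b⟩, rfl⟩ := hx
    rw [univPAWeight_univPAGen, cocycleWeight_eq_zero_iff] at h
    rcases h with rfl | rfl
    · exact univPAGen_zero_left b
    · exact univPAGen_zero_right a
  | zero => rfl
  | add x y _ _ hx hy =>
    rw [map_add, Nat.add_eq_zero_iff] at h
    rw [hx h.1, hy h.2, add_zero]

end Weight

namespace TwistedProd

variable {P A : Type*} [AddMonoid P] [AddMonoid A] [AddMonoid (TwistedProd P A)]
  {f : A → A → P}
  (hadd : ∀ x y : TwistedProd P A, x + y = ⟨x.fst + y.fst + f x.snd y.snd, x.snd + y.snd⟩)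
include hadd

theorem mk_zero_add_mk_zero (hf : f 0 0 = 0) (p q : P) :
    (⟨p, 0⟩ : TwistedProd P A) + ⟨q, 0⟩ = ⟨p + q, 0⟩ := by
  rw [hadd]
  simp only [hf, add_zero]

theorem mk_zero_add_zero_mk (hf : ∀ a, f 0 a = 0) (p : P) (a : A) :
    (⟨p, 0⟩ : TwistedProd P A) + ⟨0, a⟩ = ⟨p, a⟩ := by
  rw [hadd]
  simp only [hf, add_zero, zero_add]

def inlHom (hf : f 0 0 = 0) (hzero : (0 : TwistedProd P A) = ⟨0, 0⟩) :
    P →+ TwistedProd P A where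
  toFun p := ⟨p, 0⟩
  map_zero' := hzero.symm
  map_add' := (mk_zero_add_mk_zero hadd hf · · |>.symm)

theorem addMonoidFG [Finite A] [hP : AddMonoid.FG P] (hf : ∀ a, f 0 a = 0)
    (hzero : (0 : TwistedProd P A) = ⟨0, 0⟩) : AddMonoid.FG (TwistedProd P A) := by
  obtain ⟨G, hG, hGfin⟩ := AddMonoid.fg_iff.1 hP
  let inl := inlHom hadd (hf 0) hzero
  refine AddMonoid.fg_iff.2 ⟨inl '' G ∪ Set.range fun a => ⟨0, a⟩, eq_top_iff.2 ?_,
    (hGfin.image _).union (Set.finite_range _)⟩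
  rintro ⟨p, a⟩ -
  have hp : inl p ∈ AddSubmonoid.closure (inl '' G) := by
    rw [← AddMonoidHom.map_mclosure, hG]
    exact AddSubmonoid.mem_map_of_mem _ (AddSubmonoid.mem_top p)
  rw [← mk_zero_add_zero_mk hadd hf]
  exact add_mem (AddSubmonoid.closure_mono Set.subset_union_left hp)
    (AddSubmonoid.subset_closure (Or.inr ⟨a, rfl⟩))

def natHom (φ : P →+ ℕ) (s : A → ℕ) (hs : ∀ a b, φ (f a b) + s (a + b) = s a + s b) :
    TwistedProd P A →+ ℕ where
  toFun x := φ x.fst + s x.snd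
  map_add' x y := by
    rw [hadd]
    have := hs x.snd y.snd
    simp only [map_add]
    omega
  map_zero' := by
    have h := congrArg (fun x : TwistedProd P A => φ x.fst + s x.snd) (add_zero 0)
    have := hs (0 : TwistedProd P A).snd (0 : TwistedProd P A).snd
    simp only [hadd, map_add] at h
    omega

theorem eq_zero_of_natHom_eq_zero {φ : P →+ ℕ} {s : A → ℕ}
    (hs : ∀ a b, φ (f a b) + s (a + b) = s a + s b) (hφ : ∀ p, φ p = 0 → p = 0)
    (hs₀ : ∀ a, s a = 0 → a = 0) (hzero : (0 : TwistedProd P A) = ⟨0, 0⟩)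
    {x : TwistedProd P A} (h : natHom hadd φ s hs x = 0) : x = 0 := by
  change φ x.fst + s x.snd = 0 at h
  rw [hzero, ← hφ x.fst (by omega), ← hs₀ x.snd (by omega)]

end TwistedProd

/-- For a finite abelian group `A`, the universal monoids `P_A` and `Q_A = P_A ×_e A`
(the twisted product with respect to the universal 2-cocycle) are finitely generated,
quasi-integral (`x + y = x` implies `y = 0`) and sharp (`x + y = 0` implies
`x = y = 0`). -/
theorem stacky_covers_PA_QA_quasi_fine_sharp (A : Type*) [AddCommGroup A] [Fintype A]
    [AddCommMonoid (TwistedProd (UnivPA A) A)]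
    (hadd : ∀ x y : TwistedProd (UnivPA A) A,
      x + y = ⟨x.fst + y.fst + univPAGen x.snd y.snd, x.snd + y.snd⟩)
    (hzero : (0 : TwistedProd (UnivPA A) A) = ⟨0, 0⟩) :
    AddMonoid.FG (UnivPA A) ∧
    (∀ x y : UnivPA A, x + y = x → y = 0) ∧
    (∀ x y : UnivPA A, x + y = 0 → x = 0 ∧ y = 0) ∧
    AddMonoid.FG (TwistedProd (UnivPA A) A) ∧
    (∀ x y : TwistedProd (UnivPA A) A, x + y = x → y = 0) ∧
    (∀ x y : TwistedProd (UnivPA A) A, x + y = 0 → x = 0 ∧ y = 0) := by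
  have hP : ∀ q : UnivPA A, univPAWeight q = 0 → q = 0 := fun _ => eq_zero_of_univPAWeight_eq_zero
  have hs : ∀ a b : A, univPAWeight (univPAGen a b) + nonzeroIndicator (a + b) =
      nonzeroIndicator a + nonzeroIndicator b := fun a b => by
    rw [univPAWeight_univPAGen, cocycleWeight_add_nonzeroIndicator]
  have hQ : ∀ x, TwistedProd.natHom hadd univPAWeight nonzeroIndicator hs x = 0 → x = 0 :=
    fun _ => TwistedProd.eq_zero_of_natHom_eq_zero hadd hs hP
      (fun _ => nonzeroIndicator_eq_zero_iff.1) hzero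
  exact ⟨inferInstance,
    fun _ _ => eq_zero_of_add_eq_self_of_natHom _ hP,
    fun _ _ => eq_zero_of_add_eq_zero_of_natHom _ hP,
    TwistedProd.addMonoidFG hadd univPAGen_zero_left hzero,
    fun _ _ => eq_zero_of_add_eq_self_of_natHom _ hQ,
    fun _ _ => eq_zero_of_add_eq_zero_of_natHom _ hQ⟩
end

section
/- Let A be an abelian group, P a commutative monoid (written additively), and f : A × A → P a commutative 2-cocycle. For a list (λ₁, …, λ_n) of elements of A define H(λ₁, …, λ_n) = f(λ₁, λ₂) + f(λ₁ + λ₂, λ₃) + ⋯ + f(λ₁ + ⋯ + λ_{n−1}, λ_n), with H = 0 for lists of length at most 1. Then (i) H is invariant under permutations of the list: for any permutation σ of {1, …, n}, H(λ_{σ(1)}, …, λ_{σ(n)}) = H(λ₁, …, λ_n); and (ii) for the concatenation of two lists ℓ and ℓ', H(ℓ ++ ℓ') = H(ℓ) + H(ℓ') + f(Σℓ, Σℓ'), where Σℓ denotes the sum of the entries of ℓ. -/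
/-- For a list `(λ₁, …, λ_n)` of elements of `A`, the element
`H (λ₁, …, λ_n) = f (λ₁, λ₂) + f (λ₁ + λ₂, λ₃) + ⋯ + f (λ₁ + ⋯ + λ_{n−1}, λ_n)`,
with `H = 0` for lists of length at most `1`. -/
def cocycleH {A P : Type*} [AddCommGroup A] [AddCommMonoid P] (f : A × A → P) :
    List A → P
  | [] => 0
  | [_] => 0
  | a :: b :: l => f (a, b) + cocycleH f ((a + b) :: l)
termination_by l => l.length

lemma cocycleH_cons {A P : Type*} [AddCommGroup A] [AddCommMonoid P] (f : A × A → P)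
    (hf0 : ∀ lam : A, f (0, lam) = 0)
    (hfc : ∀ lam lam' : A, f (lam, lam') = f (lam', lam))
    (hfa : ∀ lam lam' lam'' : A,
      f (lam, lam') + f (lam + lam', lam'') = f (lam', lam'') + f (lam' + lam'', lam))
    (l : List A) : ∀ a : A, cocycleH f (a :: l) = cocycleH f l + f (a, l.sum) := by
  induction l with
  | nil => intro a; simp [cocycleH, hfc a 0, hf0]
  | cons b l ih =>
    intro a
    rw [cocycleH, ih (a + b), ih b]
    have := hfa a b l.sum
    rw [hfc (b + l.sum) a] at this
    simp only [List.sum_cons]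
    rw [show f (a, b) + (cocycleH f l + f (a + b, l.sum)) =
      f (a, b) + f (a + b, l.sum) + cocycleH f l by abel, this]
    abel

/-- For a commutative 2-cocycle `f : A × A → P`, the quantity `H` is invariant under
permutations of the list, and satisfies `H (ℓ ++ ℓ') = H ℓ + H ℓ' + f (Σℓ, Σℓ')`. -/
theorem stacky_covers_cocycleH_perm_and_append (A P : Type*) [AddCommGroup A]
    [AddCommMonoid P] (f : A × A → P)
    (hf0 : ∀ lam : A, f (0, lam) = 0)
    (hfc : ∀ lam lam' : A, f (lam, lam') = f (lam', lam))
    (hfa : ∀ lam lam' lam'' : A,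
      f (lam, lam') + f (lam + lam', lam'') = f (lam', lam'') + f (lam' + lam'', lam)) :
    (∀ l l' : List A, l.Perm l' → cocycleH f l = cocycleH f l') ∧
    (∀ l l' : List A,
      cocycleH f (l ++ l') = cocycleH f l + cocycleH f l' + f (l.sum, l'.sum)) := by
  have hcons := cocycleH_cons f hf0 hfc hfa
  constructor
  · intro l l' h
    induction h with
    | nil => rfl
    | cons a h ih => rw [hcons _ a, hcons _ a, ih, h.sum_eq]
    | swap a b l =>
      rw [cocycleH, cocycleH, hfc b a, add_comm b a]
    | trans _ _ ih1 ih2 => rw [ih1, ih2]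
  · intro l l'
    induction l with
    | nil => simp [cocycleH, hf0]
    | cons a l ih =>
      rw [List.cons_append, hcons _ a, ih, hcons _ a, List.sum_cons, List.sum_append]
      have := hfa a l.sum l'.sum
      rw [hfc (l.sum + l'.sum) a] at this
      rw [add_assoc (cocycleH f l + cocycleH f l'), ← this]
      abel
end

section
/- Let Q be a commutative monoid (written additively) that is finitely generated, quasi-integral (q + q' = q implies q' = 0) and sharp (q + q' = 0 implies q = q' = 0), and let P ⊆ Q be a submonoid that is also finitely generated, quasi-integral and sharp, such that the inclusion P ↪ Q is flat and Kummer. Define q ≤ q' if there exists p ∈ P with q' = q + p, and define q ∼ q' if there exist p, p' ∈ P with q + p = q' + p'. Then ∼ is an equivalence relation, and for every q₀ ∈ Q its equivalence class {q ∈ Q : q ∼ q₀} contains a unique ≤-minimal element t; moreover the class equals t + P, and the map P → {q : q ∼ q₀}, p ↦ t + p, is a bijection. -/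
/-!
Since `Q` is finitely generated it is a quotient of some `ℕⁿ`, so by Dickson's lemma the
divisibility preorder of `Q` is a well-quasi-order; quasi-integrality and sharpness make strict
divisibility by a nonzero element well-founded. A minimal element `t` of a class of `∼` is then
not of the form `q + p` with `0 ≠ p ∈ P`, since such a `q` lies in the same class.
Integrality of `P ↪ Q` turns any relation `q + p = t + p'` into a splitting `q = p₁ + q'`,
`t = p₂ + q'`, so `p₂ = 0` and `q ∈ t + P`; the flatness
condition, applied to `p₁ + t = p₂ + t`, likewise gives `p₁ = p₂`.
-/

section DivisibilityOrder

variable {Q : Type*} [AddCommMonoid Q]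

theorem wellQuasiOrdered_exists_add [AddMonoid.FG Q] :
    WellQuasiOrdered (fun a b : Q => ∃ c, b = a + c) := by
  obtain ⟨n, f, hf⟩ := Module.Finite.exists_fin' ℕ Q
  refine wellQuasiOrdered_le.of_surjective ⟨f, fun {a b} hab => ⟨f (b - a), ?_⟩⟩ hf
  rw [← map_add, add_tsub_cancel_of_le hab]

theorem eq_zero_of_eq_add_of_eq_add (hQqi : ∀ q q' : Q, q + q' = q → q' = 0)
    (hQsharp : ∀ q q' : Q, q + q' = 0 → q = 0 ∧ q' = 0) {a b c d : Q}
    (hab : a = b + c) (hba : b = a + d) : c = 0 ∧ d = 0 := by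
  have hdc : d + c = 0 := hQqi a _ (by rw [← add_assoc, ← hba, ← hab])
  exact (hQsharp d c hdc).symm

theorem wellFounded_exists_add_ne_zero [AddMonoid.FG Q]
    (hQqi : ∀ q q' : Q, q + q' = q → q' = 0)
    (hQsharp : ∀ q q' : Q, q + q' = 0 → q = 0 ∧ q' = 0) :
    WellFounded (fun a b : Q => ∃ c ≠ 0, b = a + c) := by
  have : IsPreorder Q (fun a b : Q => ∃ c, b = a + c) :=
    { refl := fun a => ⟨0, (add_zero a).symm⟩
      trans := fun a b c ⟨d, hd⟩ ⟨e, he⟩ => ⟨d + e, by rw [he, hd, add_assoc]⟩ }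
  refine wellQuasiOrdered_exists_add.wellFounded.mono fun a b ⟨c, hc, hbac⟩ => ⟨⟨c, hbac⟩, ?_⟩
  rintro ⟨d, hd⟩
  exact hc (eq_zero_of_eq_add_of_eq_add hQqi hQsharp hbac hd).1

end DivisibilityOrder

namespace AddSubmonoid

variable {Q : Type*} [AddCommMonoid Q] (P : AddSubmonoid Q)

def QuotRel (q q' : Q) : Prop := ∃ p ∈ P, ∃ p' ∈ P, q + p = q' + p'

def Indivisible (t : Q) : Prop := ∀ q, ∀ p ∈ P, t = q + p → p = 0

def IsIntegralInclusion : Prop :=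
  ∀ p₁ p₂ q₁ q₂ : Q, p₁ ∈ P → p₂ ∈ P → p₁ + q₁ = p₂ + q₂ →
    ∃ q' : Q, ∃ p₁' ∈ P, ∃ p₂' ∈ P, q₁ = p₁' + q' ∧ q₂ = p₂' + q' ∧ p₁ + p₁' = p₂ + p₂'

theorem quotRel_equivalence : Equivalence P.QuotRel where
  refl q := ⟨0, P.zero_mem, 0, P.zero_mem, rfl⟩
  symm := fun ⟨p, hp, p', hp', h⟩ => ⟨p', hp', p, hp, h.symm⟩
  trans := fun {q q' q''} ⟨a, ha, b, hb, hab⟩ ⟨c, hc, d, hd, hcd⟩ =>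
    ⟨a + c, P.add_mem ha hc, d + b, P.add_mem hd hb, by
      calc q + (a + c) = q' + c + b := by rw [← add_assoc, hab, add_right_comm]
        _ = q'' + (d + b) := by rw [hcd, add_assoc]⟩

variable {P}

theorem quotRel_add_mem (q : Q) {p : Q} (hp : p ∈ P) : P.QuotRel (q + p) q :=
  ⟨0, P.zero_mem, p, hp, add_zero _⟩

theorem exists_indivisible_quotRel [AddMonoid.FG Q]
    (hQqi : ∀ q q' : Q, q + q' = q → q' = 0)
    (hQsharp : ∀ q q' : Q, q + q' = 0 → q = 0 ∧ q' = 0) (q₀ : Q) :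
    ∃ t, P.Indivisible t ∧ P.QuotRel t q₀ := by
  obtain ⟨t, ht, hmin⟩ := (wellFounded_exists_add_ne_zero hQqi hQsharp).has_min
    {q | P.QuotRel q q₀} ⟨q₀, (quotRel_equivalence P).refl q₀⟩
  refine ⟨t, fun q p hp htqp => ?_, ht⟩
  have hequiv := quotRel_equivalence P
  have hq : P.QuotRel q q₀ := hequiv.trans (hequiv.symm (htqp ▸ quotRel_add_mem q hp)) ht
  by_contra hp0
  exact hmin q hq ⟨p, hp0, htqp⟩

theorem Indivisible.exists_eq_add_of_quotRel
    (hint : P.IsIntegralInclusion) {t q : Q} (ht : P.Indivisible t) (hqt : P.QuotRel q t) :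
    ∃ p ∈ P, q = t + p := by
  obtain ⟨a, ha, b, hb, hab⟩ := hqt
  obtain ⟨q', a', ha', b', hb', hq, htq', -⟩ :=
    hint a b q t ha hb (by rw [add_comm a, hab, add_comm])
  have hb'0 : b' = 0 := ht q' b' hb' (by rw [htq', add_comm])
  rw [hb'0, zero_add] at htq'
  exact ⟨a', ha', by rw [hq, htq', add_comm]⟩

theorem Indivisible.quotRel_iff
    (hint : P.IsIntegralInclusion) {t q₀ q : Q} (ht : P.Indivisible t) (htq₀ : P.QuotRel t q₀) :
    P.QuotRel q q₀ ↔ ∃ p ∈ P, q = t + p := by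
  have hequiv := quotRel_equivalence P
  refine ⟨fun hq => ht.exists_eq_add_of_quotRel hint (hequiv.trans hq (hequiv.symm htq₀)), ?_⟩
  rintro ⟨p, hp, rfl⟩
  exact hequiv.trans (quotRel_add_mem t hp) htq₀

theorem Indivisible.setOf_quotRel_eq_image
    (hint : P.IsIntegralInclusion) {t q₀ : Q} (ht : P.Indivisible t) (htq₀ : P.QuotRel t q₀) :
    {q | P.QuotRel q q₀} = (fun p => t + p) '' (P : Set Q) := by
  ext q
  simp only [Set.mem_ofPred_eq, ht.quotRel_iff hint htq₀, Set.mem_image, SetLike.mem_coe,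
    eq_comm]

theorem Indivisible.injOn_add
    (hflat : ∀ p₁ p₂ q : Q, p₁ ∈ P → p₂ ∈ P → p₁ + q = p₂ + q →
      ∃ q' : Q, ∃ p' ∈ P, q = p' + q' ∧ p₁ + p' = p₂ + p')
    {t : Q} (ht : P.Indivisible t) : Set.InjOn (fun p => t + p) P := by
  intro p₁ hp₁ p₂ hp₂ h
  obtain ⟨q', p', hp', htq', hp⟩ :=
    hflat p₁ p₂ t hp₁ hp₂ (by simpa only [add_comm t] using h)
  have hp'0 : p' = 0 := ht q' p' hp' (by rw [htq', add_comm])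
  simpa only [hp'0, add_zero] using hp

end AddSubmonoid

open AddSubmonoid in
theorem stacky_covers_flat_kummer_minimal_element_general (Q : Type*) [AddCommMonoid Q]
    [AddMonoid.FG Q]
    (hQqi : ∀ q q' : Q, q + q' = q → q' = 0)
    (hQsharp : ∀ q q' : Q, q + q' = 0 → q = 0 ∧ q' = 0)
    (P : AddSubmonoid Q)
    -- the inclusion `P ↪ Q` is integral
    (hint : ∀ p₁ p₂ q₁ q₂ : Q, p₁ ∈ P → p₂ ∈ P → p₁ + q₁ = p₂ + q₂ →
      ∃ q' : Q, ∃ p₁' ∈ P, ∃ p₂' ∈ P,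
        q₁ = p₁' + q' ∧ q₂ = p₂' + q' ∧ p₁ + p₁' = p₂ + p₂')
    -- the supplementary flatness condition
    (hflat : ∀ p₁ p₂ q : Q, p₁ ∈ P → p₂ ∈ P → p₁ + q = p₂ + q →
      ∃ q' : Q, ∃ p' ∈ P, q = p' + q' ∧ p₁ + p' = p₂ + p') :
    Equivalence (fun q q' : Q => ∃ p ∈ P, ∃ p' ∈ P, q + p = q' + p') ∧
    ∀ q₀ : Q, ∃ t : Q,
      (∃ p ∈ P, ∃ p' ∈ P, t + p = q₀ + p') ∧
      -- `t` is `≤`-minimal (indeed least) in the class of `q₀`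
      (∀ q : Q, (∃ p ∈ P, ∃ p' ∈ P, q + p = q₀ + p') → ∃ p ∈ P, q = t + p) ∧
      -- uniqueness of the minimal element
      (∀ t' : Q, (∃ p ∈ P, ∃ p' ∈ P, t' + p = q₀ + p') →
        (∀ q : Q, (∃ p ∈ P, ∃ p' ∈ P, q + p = q₀ + p') → ∃ p ∈ P, q = t' + p) →
        t' = t) ∧
      -- the class equals `t + P`
      {q : Q | ∃ p ∈ P, ∃ p' ∈ P, q + p = q₀ + p'} = (fun p => t + p) '' (P : Set Q) ∧
      -- `p ↦ t + p` is a bijection from `P` onto the class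
      Set.BijOn (fun p => t + p) (P : Set Q)
        {q : Q | ∃ p ∈ P, ∃ p' ∈ P, q + p = q₀ + p'} := by
  refine ⟨quotRel_equivalence P, fun q₀ => ?_⟩
  obtain ⟨t, ht, htq₀⟩ := exists_indivisible_quotRel hQqi hQsharp q₀
  have hclass : ∀ q, P.QuotRel q q₀ ↔ ∃ p ∈ P, q = t + p := fun q => ht.quotRel_iff hint htq₀
  have himage := ht.setOf_quotRel_eq_image hint htq₀
  refine ⟨t, htq₀, fun q => (hclass q).1, fun t' ht'q₀ ht'least => ?_, himage, ?_⟩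
  · obtain ⟨u, -, htu⟩ := ht'least t htq₀
    obtain ⟨v, -, ht'v⟩ := (hclass t').1 ht'q₀
    rw [ht'v, (eq_zero_of_eq_add_of_eq_add hQqi hQsharp htu ht'v).2, add_zero]
  · exact himage ▸ (ht.injOn_add hflat).bijOn_image

/-- Let `Q` be a quasi-fine sharp commutative monoid and `P ⊆ Q` a quasi-fine sharp
submonoid such that the inclusion `P ↪ Q` is flat and Kummer.  With `q ≤ q'` iff
`q' = q + p` for some `p ∈ P` and `q ∼ q'` iff `q + p = q' + p'` for some `p, p' ∈ P`,
the relation `∼` is an equivalence relation; every equivalence class contains a unique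
`≤`-minimal element `t`; the class equals `t + P`; and `p ↦ t + p` is a bijection from `P`
onto the class. -/
theorem stacky_covers_flat_kummer_minimal_element (Q : Type*) [AddCommMonoid Q]
    [AddMonoid.FG Q]
    (hQqi : ∀ q q' : Q, q + q' = q → q' = 0)
    (hQsharp : ∀ q q' : Q, q + q' = 0 → q = 0 ∧ q' = 0)
    (P : AddSubmonoid Q) (hPfg : P.FG)
    (hPqi : ∀ p p' : Q, p ∈ P → p' ∈ P → p + p' = p → p' = 0)
    (hPsharp : ∀ p p' : Q, p ∈ P → p' ∈ P → p + p' = 0 → p = 0 ∧ p' = 0)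
    -- the inclusion `P ↪ Q` is integral
    (hint : ∀ p₁ p₂ q₁ q₂ : Q, p₁ ∈ P → p₂ ∈ P → p₁ + q₁ = p₂ + q₂ →
      ∃ q' : Q, ∃ p₁' ∈ P, ∃ p₂' ∈ P,
        q₁ = p₁' + q' ∧ q₂ = p₂' + q' ∧ p₁ + p₁' = p₂ + p₂')
    -- the supplementary flatness condition
    (hflat : ∀ p₁ p₂ q : Q, p₁ ∈ P → p₂ ∈ P → p₁ + q = p₂ + q →
      ∃ q' : Q, ∃ p' ∈ P, q = p' + q' ∧ p₁ + p' = p₂ + p')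
    -- the inclusion `P ↪ Q` is Kummer
    (hkum : ∀ q : Q, ∃ n : ℕ, 1 ≤ n ∧ n • q ∈ P) :
    Equivalence (fun q q' : Q => ∃ p ∈ P, ∃ p' ∈ P, q + p = q' + p') ∧
    ∀ q₀ : Q, ∃ t : Q,
      (∃ p ∈ P, ∃ p' ∈ P, t + p = q₀ + p') ∧
      -- `t` is `≤`-minimal (indeed least) in the class of `q₀`
      (∀ q : Q, (∃ p ∈ P, ∃ p' ∈ P, q + p = q₀ + p') → ∃ p ∈ P, q = t + p) ∧
      -- uniqueness of the minimal element
      (∀ t' : Q, (∃ p ∈ P, ∃ p' ∈ P, t' + p = q₀ + p') →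
        (∀ q : Q, (∃ p ∈ P, ∃ p' ∈ P, q + p = q₀ + p') → ∃ p ∈ P, q = t' + p) →
        t' = t) ∧
      -- the class equals `t + P`
      {q : Q | ∃ p ∈ P, ∃ p' ∈ P, q + p = q₀ + p'} = (fun p => t + p) '' (P : Set Q) ∧
      -- `p ↦ t + p` is a bijection from `P` onto the class
      Set.BijOn (fun p => t + p) (P : Set Q)
        {q : Q | ∃ p ∈ P, ∃ p' ∈ P, q + p = q₀ + p'} :=
  stacky_covers_flat_kummer_minimal_element_general Q hQqi hQsharp P hint hflat
end

section
/- Let A be an abelian group, M a commutative monoid (written additively), and f : A × A → M a commutative 2-cocycle. Then the set A^⊥ = { λ ∈ A : f(λ, λ') is an (additive) unit of M for every λ' ∈ A } is a subgroup of A: it contains 0, it is closed under negation, and it is closed under addition. -/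
/-- Let `f : A × A → M` be a commutative 2-cocycle of an abelian group `A` with values in a
commutative monoid `M`.  Then `A^⊥ = {λ : f (λ, λ') is a unit for all λ'}` is a subgroup of
`A`: it contains `0`, is closed under negation, and is closed under addition. -/
theorem stacky_covers_Aperp_subgroup (A M : Type*) [AddCommGroup A] [AddCommMonoid M]
    (f : A × A → M)
    (hf0 : ∀ lam : A, f (0, lam) = 0)
    (hfc : ∀ lam lam' : A, f (lam, lam') = f (lam', lam))
    (hfa : ∀ lam lam' lam'' : A,
      f (lam, lam') + f (lam + lam', lam'') = f (lam', lam'') + f (lam' + lam'', lam)) :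
    (0 ∈ {lam : A | ∀ lam' : A, IsAddUnit (f (lam, lam'))}) ∧
    (∀ lam ∈ {lam : A | ∀ lam' : A, IsAddUnit (f (lam, lam'))},
      -lam ∈ {lam : A | ∀ lam' : A, IsAddUnit (f (lam, lam'))}) ∧
    (∀ lam mu : A, lam ∈ {lam : A | ∀ lam' : A, IsAddUnit (f (lam, lam'))} →
      mu ∈ {lam : A | ∀ lam' : A, IsAddUnit (f (lam, lam'))} →
      lam + mu ∈ {lam : A | ∀ lam' : A, IsAddUnit (f (lam, lam'))}) := by
  refine ⟨fun lam' => by simp [hf0], ?_, ?_⟩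
  · intro lam hlam lam''
    have h := hfa lam (-lam) lam''
    rw [add_neg_cancel, hf0, add_zero] at h
    -- h : f (lam, -lam) = f (-lam, lam'') + f (-lam + lam'', lam)
    exact isAddUnit_of_add_isAddUnit_left (h ▸ hlam (-lam))
  · intro lam mu hlam hmu lam'
    have h := hfa lam mu lam'
    have hr : IsAddUnit (f (mu, lam') + f (mu + lam', lam)) := by
      exact (hmu lam').add (by rw [hfc]; exact hlam (mu + lam'))
    rw [← h] at hr
    exact isAddUnit_of_add_isAddUnit_right hr
end

section
/- Let A be an abelian group, P a commutative monoid (written additively), f : A × A → P a commutative 2-cocycle, and Q = P ×_f A the twisted product, with γ : P → Q, p ↦ (p, 0), the canonical inclusion. Regard the monoid algebra ℤ[Q] as a module over the monoid algebra ℤ[P] via the ring homomorphism ℤ[P] → ℤ[Q] induced by γ. Then ℤ[Q] is a free ℤ[P]-module with basis the monomials { X^{(0,λ)} : λ ∈ A }; consequently ℤ[Q] ≅ ⊕_{λ ∈ A} ℤ[P] as a ℤ[P]-module, with the summand indexed by λ spanned by X^{(0,λ)}. -/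
/-- The ring map `ℤ[P] → ℤ[Q]` induced by the canonical inclusion `γ : p ↦ (p, 0)`,
as a map of underlying sets. -/
noncomputable def gammaStar (P A : Type*) [AddCommMonoid P] [AddCommGroup A]
    [AddCommMonoid (TwistedProd P A)] (cl : AddMonoidAlgebra ℤ P) :
    AddMonoidAlgebra ℤ (TwistedProd P A) :=
  AddMonoidAlgebra.ofCoeff
    (Finsupp.mapDomain (fun p : P => (⟨p, 0⟩ : TwistedProd P A)) cl.coeff)

/-!
Since `f (0, λ) = 0`, we have `γ p + (0, λ) = (p, λ)` in `Q`, so multiplying `γ_* c` by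
`X^{(0,λ)}` just relabels each monomial `X^p` of `c` as `X^{(p,λ)}`. The map of the theorem is
therefore the uncurrying `⊕_λ ℤ[P] ≃ ℤ[A × P]` followed by the relabelling `A × P ≃ Q`.
-/

open AddMonoidAlgebra

namespace TwistedProd

variable {P A : Type*}

def prodEquiv : A × P ≃ TwistedProd P A where
  toFun x := ⟨x.2, x.1⟩
  invFun x := (x.snd, x.fst)

variable (R : Type*) [Semiring R]

noncomputable def uncurryAddEquiv :
    (A →₀ AddMonoidAlgebra R P) ≃+ AddMonoidAlgebra R (TwistedProd P A) :=
  (Finsupp.mapRange.addEquiv coeffAddEquiv).trans <|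
    Finsupp.curryAddEquiv.symm.trans <| (Finsupp.domCongr prodEquiv).trans coeffAddEquiv.symm

@[simp]
theorem uncurryAddEquiv_single_single (lam : A) (p : P) (r : R) :
    uncurryAddEquiv R (Finsupp.single lam (single p r)) =
      single (⟨p, lam⟩ : TwistedProd P A) r := by
  simp [uncurryAddEquiv, prodEquiv]

theorem mk_zero_add_mk_zero_s18 [AddZeroClass P] [AddZeroClass A] [Add (TwistedProd P A)]
    {f : A × A → P} (hf0 : ∀ lam : A, f (0, lam) = 0)
    (hadd : ∀ x y : TwistedProd P A, x + y = ⟨x.fst + y.fst + f (x.snd, y.snd), x.snd + y.snd⟩)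
    (p : P) (lam : A) :
    (⟨p, 0⟩ : TwistedProd P A) + ⟨0, lam⟩ = ⟨p, lam⟩ := by
  simp [hadd, hf0]

end TwistedProd

theorem gammaStar_mul_single_mk_zero {P A : Type*} [AddCommMonoid P] [AddCommGroup A]
    [AddCommMonoid (TwistedProd P A)] {f : A × A → P} (hf0 : ∀ lam : A, f (0, lam) = 0)
    (hadd : ∀ x y : TwistedProd P A, x + y = ⟨x.fst + y.fst + f (x.snd, y.snd), x.snd + y.snd⟩)
    (x : AddMonoidAlgebra ℤ P) (lam : A) :
    gammaStar P A x * single (⟨0, lam⟩ : TwistedProd P A) 1 =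
      TwistedProd.uncurryAddEquiv ℤ (Finsupp.single lam x) := by
  induction x using induction_linear with
  | zero => simp [gammaStar]
  | add x y hx hy =>
    rw [Finsupp.single_add, map_add, ← hx, ← hy, ← add_mul]
    congr 1
    exact mapDomain_add _ x y
  | single p r =>
    rw [TwistedProd.uncurryAddEquiv_single_single,
      show gammaStar P A (single p r) = single ⟨p, 0⟩ r from mapDomain_single, single_mul_single,
      TwistedProd.mk_zero_add_mk_zero_s18 hf0 hadd, mul_one]

theorem stacky_covers_monoid_algebra_free_general (P A : Type*) [AddCommMonoid P] [AddCommGroup A]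
    (f : A × A → P)
    (hf0 : ∀ lam : A, f (0, lam) = 0)
    [AddCommMonoid (TwistedProd P A)]
    (hadd : ∀ x y : TwistedProd P A,
      x + y = ⟨x.fst + y.fst + f (x.snd, y.snd), x.snd + y.snd⟩) :
    Function.Bijective (fun c : A →₀ AddMonoidAlgebra ℤ P =>
      c.sum fun lam cl =>
        gammaStar P A cl *
          AddMonoidAlgebra.single (⟨0, lam⟩ : TwistedProd P A) (1 : ℤ)) := by
  convert (TwistedProd.uncurryAddEquiv (P := P) (A := A) ℤ).bijective with c
  simp_rw [gammaStar_mul_single_mk_zero hf0 hadd, ← map_finsuppSum, Finsupp.sum_single]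

/-- Let `f : A × A → P` be a commutative 2-cocycle and `Q = P ×_f A` the twisted product,
with canonical inclusion `γ : p ↦ (p, 0)`.  Regarding `ℤ[Q]` as a `ℤ[P]`-module via the
ring homomorphism induced by `γ`, `ℤ[Q]` is a free `ℤ[P]`-module with basis the monomials
`X^{(0,λ)}` for `λ ∈ A`:  the map `⊕_{λ ∈ A} ℤ[P] → ℤ[Q]` sending a finitely supported
family `(c_λ)` to `Σ_λ γ_*(c_λ) · X^{(0,λ)}` is a bijection. -/
theorem stacky_covers_monoid_algebra_free (P A : Type*) [AddCommMonoid P] [AddCommGroup A]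
    (f : A × A → P)
    (hf0 : ∀ lam : A, f (0, lam) = 0)
    (hfc : ∀ lam lam' : A, f (lam, lam') = f (lam', lam))
    (hfa : ∀ lam lam' lam'' : A,
      f (lam, lam') + f (lam + lam', lam'') = f (lam', lam'') + f (lam' + lam'', lam))
    [AddCommMonoid (TwistedProd P A)]
    (hadd : ∀ x y : TwistedProd P A,
      x + y = ⟨x.fst + y.fst + f (x.snd, y.snd), x.snd + y.snd⟩)
    (hzero : (0 : TwistedProd P A) = ⟨0, 0⟩) :
    Function.Bijective (fun c : A →₀ AddMonoidAlgebra ℤ P =>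
      c.sum fun lam cl =>
        gammaStar P A cl *
          AddMonoidAlgebra.single (⟨0, lam⟩ : TwistedProd P A) (1 : ℤ)) :=
  stacky_covers_monoid_algebra_free_general P A f hf0 hadd
end
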